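/- arXiv:2010.03444 — 8 statements merged into one kernel-verified Lean document; each statement's English description precedes it below -/
import Mathlib

section
/- Ranking-Supermartingale Rule (adapted from Chakarov–Sankaranarayanan and Fioriti–Hermanns): Let (M_n)_{n∈ℕ} be an adapted, integrable real-valued process on a filtered probability space and T a stopping time. Suppose there is ε > 0 such that for every n ∈ ℕ: (i) M_n > 0 P-almost everywhere on the event {T > n}; (ii) the stopped variable M_{min(n,T)} ≥ 0 P-almost surely; and (iii) E(M_{n+1} | ℱ_n) ≤ M_n − ε P-almost everywhere on {T > n}. Then E(T) ≤ E(M_0)/ε; in particular E(T) < ∞ (positive almost sure termination). -/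
/-! The stopped process `S n = M (min n T)` changes only on `{T > n} ∈ ℱ n`, where integrating
the drift condition against `P` gives `E S (n+1) ≤ E S n - ε P(T > n)`. Telescoping and `S n ≥ 0`
give `ε ∑_{k<n} P(T > k) ≤ E M 0`, and `E T = ∑_k P(T > k)` for an `ℕ∞`-valued `T`. -/

open MeasureTheory Filter
open scoped ENNReal

theorem ENat.toNat_eq_untopA {x : ℕ∞} (hx : x ≠ ⊤) : x.toNat = x.untopA := by
  lift x to ℕ using hx
  rfl

theorem ENat.toENNReal_eq_tsum_ite_lt (x : ℕ∞) :
    (x : ℝ≥0∞) = ∑' n : ℕ, if (n : ℕ∞) < x then 1 else 0 := by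
  induction x using ENat.recTopCoe with
  | top => simp
  | coe m =>
    rw [tsum_eq_sum (s := Finset.range m) fun n hn => by simpa using hn]
    simp [Finset.sum_boole, Finset.filter_true_of_mem]

namespace MeasureTheory

variable {Ω : Type*} {mΩ : MeasurableSpace Ω} {μ : Measure Ω}

theorem lintegral_enat_eq_tsum_measure_lt {T : Ω → ℕ∞}
    (hT : ∀ n : ℕ, MeasurableSet {ω | (n : ℕ∞) < T ω}) :
    ∫⁻ ω, (T ω : ℝ≥0∞) ∂μ = ∑' n : ℕ, μ {ω | (n : ℕ∞) < T ω} := by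
  simp_rw [ENat.toENNReal_eq_tsum_ite_lt]
  rw [lintegral_tsum fun n =>
    (Measurable.ite (hT n) measurable_const measurable_const).aemeasurable]
  congr 1 with n
  rw [← lintegral_indicator_one (hT n)]
  simp [Set.indicator_apply]

theorem stoppedProcess_zero_nat {β : Type*} (u : ℕ → Ω → β) (τ : Ω → ℕ∞) :
    stoppedProcess u τ 0 = u 0 :=
  funext fun ω => stoppedProcess_eq_of_le (zero_le (a := τ ω))

theorem stoppedProcess_succ_nat {β : Type*} [AddCommGroup β] (u : ℕ → Ω → β) (τ : Ω → ℕ∞)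
    (n : ℕ) :
    stoppedProcess u τ (n + 1) =
      stoppedProcess u τ n + {ω | (n : ℕ∞) < τ ω}.indicator (u (n + 1) - u n) := by
  ext ω
  by_cases h : (n : ℕ∞) < τ ω
  · have h' : ((n + 1 : ℕ) : ℕ∞) ≤ τ ω := by exact_mod_cast Order.add_one_le_of_lt h
    rw [Pi.add_apply, Set.indicator_of_mem (show ω ∈ {ω | (n : ℕ∞) < τ ω} from h),
      stoppedProcess_eq_of_le (τ := τ) (i := n) h.le,
      stoppedProcess_eq_of_le (τ := τ) (i := n + 1) h']
    exact (add_sub_cancel _ _).symm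
  · rw [not_lt] at h
    have h' : τ ω ≤ ((n + 1 : ℕ) : ℕ∞) := h.trans (by simp)
    rw [Pi.add_apply, Set.indicator_of_notMem (show ω ∉ {ω | (n : ℕ∞) < τ ω} from not_lt.2 h),
      add_zero, stoppedProcess_eq_of_ge (τ := τ) (i := n) h,
      stoppedProcess_eq_of_ge (τ := τ) (i := n + 1) h']

variable [IsFiniteMeasure μ] {ℱ : Filtration ℕ mΩ} {u : ℕ → Ω → ℝ} {τ : Ω → ℕ∞} {ε : ℝ}

theorem integral_stoppedProcess_succ_le (hτ : IsStoppingTime ℱ τ)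
    (hu : ∀ n, Integrable (u n) μ) {n : ℕ}
    (hdrift : ∀ᵐ ω ∂μ, (n : ℕ∞) < τ ω → μ[u (n + 1)|ℱ n] ω ≤ u n ω - ε) :
    ∫ ω, stoppedProcess u τ (n + 1) ω ∂μ
      ≤ ∫ ω, stoppedProcess u τ n ω ∂μ - ε * μ.real {ω | (n : ℕ∞) < τ ω} := by
  set A := {ω | (n : ℕ∞) < τ ω}
  have hA : MeasurableSet[ℱ n] A := hτ.measurableSet_gt n
  have hdrift_int : ∫ ω in A, μ[u (n + 1)|ℱ n] ω ∂μ ≤ ∫ ω in A, (u n ω - ε) ∂μ := by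
    refine setIntegral_mono_ae_restrict integrable_condExp.integrableOn
      ((hu n).sub (integrable_const ε)).integrableOn ?_
    rw [EventuallyLE, ae_restrict_iff' (ℱ.le n _ hA)]
    exact hdrift
  rw [setIntegral_condExp (ℱ.le n) (hu (n + 1)) hA,
    integral_sub (hu n).integrableOn (integrable_const ε).integrableOn, setIntegral_const,
    smul_eq_mul] at hdrift_int
  rw [stoppedProcess_succ_nat, Pi.add_def, integral_add (integrable_stoppedProcess hτ hu n)
    (((hu (n + 1)).sub (hu n)).indicator (ℱ.le n _ hA)), integral_indicator (ℱ.le n _ hA),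
    Pi.sub_def, integral_sub (hu (n + 1)).integrableOn (hu n).integrableOn]
  linarith

theorem mul_sum_measureReal_lt_le_integral_sub_stoppedProcess (hτ : IsStoppingTime ℱ τ)
    (hu : ∀ n, Integrable (u n) μ)
    (hdrift : ∀ n : ℕ, ∀ᵐ ω ∂μ, (n : ℕ∞) < τ ω → μ[u (n + 1)|ℱ n] ω ≤ u n ω - ε) (n : ℕ) :
    ε * ∑ k ∈ Finset.range n, μ.real {ω | (k : ℕ∞) < τ ω}
      ≤ ∫ ω, u 0 ω ∂μ - ∫ ω, stoppedProcess u τ n ω ∂μ := by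
  induction n with
  | zero => simp [stoppedProcess_zero_nat]
  | succ n ih =>
    rw [Finset.sum_range_succ, mul_add]
    linarith [integral_stoppedProcess_succ_le hτ hu (hdrift n)]

end MeasureTheory

theorem ranking_supermartingale_rule_general
    {Ω : Type*} {mΩ : MeasurableSpace Ω} {P : Measure Ω} [IsProbabilityMeasure P]
    (ℱ : Filtration ℕ mΩ) (M : ℕ → Ω → ℝ) (T : Ω → ℕ∞)
    (hInt : ∀ n, Integrable (M n) P)
    (hStop : ∀ n : ℕ, MeasurableSet[ℱ n] {ω | T ω ≤ (n : ℕ∞)})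
    (ε : ℝ) (hε : 0 < ε)
    (hStopNonneg : ∀ n : ℕ, ∀ᵐ ω ∂P, 0 ≤ M (min (n : ℕ∞) (T ω)).toNat ω)
    (hDrift : ∀ n : ℕ, ∀ᵐ ω ∂P, (n : ℕ∞) < T ω →
      (P[M (n + 1)|ℱ n]) ω ≤ M n ω - ε) :
    (∫⁻ ω, (T ω : ℝ≥0∞) ∂P) ≤ ENNReal.ofReal ((∫ ω, M 0 ω ∂P) / ε) ∧
      (∫⁻ ω, (T ω : ℝ≥0∞) ∂P) < ⊤ := by
  have hT : IsStoppingTime ℱ T := hStop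
  have hsum (n : ℕ) :
      ∑ k ∈ Finset.range n, P.real {ω | (k : ℕ∞) < T ω} ≤ (∫ ω, M 0 ω ∂P) / ε := by
    have hstopped : 0 ≤ ∫ ω, stoppedProcess M T n ω ∂P := integral_nonneg_of_ae <|
      (hStopNonneg n).mono fun ω h => by
        rwa [ENat.toNat_eq_untopA (min_lt_of_left_lt (ENat.natCast_lt_top n)).ne] at h
    rw [le_div_iff₀' hε]
    linarith [mul_sum_measureReal_lt_le_integral_sub_stoppedProcess hT hInt hDrift n]
  have hbound : (∫⁻ ω, (T ω : ℝ≥0∞) ∂P) ≤ ENNReal.ofReal ((∫ ω, M 0 ω ∂P) / ε) := by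
    rw [lintegral_enat_eq_tsum_measure_lt fun n => ℱ.le n _ (hT.measurableSet_gt n)]
    refine ENNReal.tsum_le_of_sum_range_le fun n => ?_
    calc ∑ k ∈ Finset.range n, P {ω | (k : ℕ∞) < T ω}
        = ENNReal.ofReal (∑ k ∈ Finset.range n, P.real {ω | (k : ℕ∞) < T ω}) := by
          simp [ENNReal.ofReal_sum_of_nonneg, ofReal_measureReal]
      _ ≤ _ := ENNReal.ofReal_le_ofReal (hsum n)
  exact ⟨hbound, hbound.trans_lt ENNReal.ofReal_lt_top⟩

/-- **Ranking-Supermartingale Rule.** If `(M n)` is an adapted integrable process, `T` a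
stopping time, and for some `ε > 0` the process is positive on `{T > n}`, nonnegative when
stopped, and decreases in conditional expectation by at least `ε` on `{T > n}`, then
`E(T) ≤ E(M 0) / ε`; in particular `E(T) < ∞` (positive almost sure termination). -/
theorem ranking_supermartingale_rule
    {Ω : Type*} {mΩ : MeasurableSpace Ω} {P : Measure Ω} [IsProbabilityMeasure P]
    (ℱ : Filtration ℕ mΩ) (M : ℕ → Ω → ℝ) (T : Ω → ℕ∞)
    (hAdapted : Adapted ℱ M) (hInt : ∀ n, Integrable (M n) P)
    (hStop : ∀ n : ℕ, MeasurableSet[ℱ n] {ω | T ω ≤ (n : ℕ∞)})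
    (ε : ℝ) (hε : 0 < ε)
    (hPos : ∀ n : ℕ, ∀ᵐ ω ∂P, (n : ℕ∞) < T ω → 0 < M n ω)
    (hStopNonneg : ∀ n : ℕ, ∀ᵐ ω ∂P, 0 ≤ M (min (n : ℕ∞) (T ω)).toNat ω)
    (hDrift : ∀ n : ℕ, ∀ᵐ ω ∂P, (n : ℕ∞) < T ω →
      (P[M (n + 1)|ℱ n]) ω ≤ M n ω - ε) :
    (∫⁻ ω, (T ω : ℝ≥0∞) ∂P) ≤ ENNReal.ofReal ((∫ ω, M 0 ω ∂P) / ε) ∧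
      (∫⁻ ω, (T ω : ℝ≥0∞) ∂P) < ⊤ :=
  ranking_supermartingale_rule_general ℱ M T hInt hStop ε hε hStopNonneg hDrift
end

section
/- Repulsing-AST Rule (adapted from Chatterjee–Novotný–Žikelić): Let (M_n)_{n∈ℕ} be an adapted, integrable real-valued process on a filtered probability space and T a stopping time. Suppose there are constants ε > 0 and c > 0 such that: (i) M_0 < 0 P-almost surely; (ii) for every n ∈ ℕ, M_n ≥ 0 P-almost everywhere on the event {T = n}; (iii) for every n ∈ ℕ, E(M_{n+1} | ℱ_n) ≤ M_n − ε P-almost everywhere on {T > n}; and (iv) for every n ∈ ℕ, |M_{n+1} − M_n| < c P-almost surely. Then P(T = ∞) > 0, i.e. termination is not almost sure. -/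
/-!
Take `t = min (1 / c) (ε / c²)` and look at `exp (t M_{n ∧ T})`. On `{n < T}` the increment
`Δ = M_{n+1} - M_n` satisfies `|t Δ| ≤ 1`, so `exp (t Δ) ≤ 1 + t Δ + t²c²`; pulling the
`ℱ_n`-measurable weight `exp (t M_n)` out of the conditional expectation and using
`E[Δ | ℱ_n] ≤ -ε`, the expectation changes by at most `(t²c² - tε) E[exp (t M_n); n < T] ≤ 0`.
On `{T ≤ n}` the stopped value is `M_T ≥ 0`, so Markov's inequality gives
`P(T ≤ n) ≤ E exp (t M_0) < 1` for every `n`, hence `P(T < ∞) < 1`.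
-/

open MeasureTheory Real

lemma exp_mul_le_of_abs_sub_le {t c x y : ℝ} (ht : 0 ≤ t) (htc : t * c ≤ 1)
    (hxy : |y - x| ≤ c) :
    exp (t * y) ≤ exp (t * x) * (1 + t * (y - x) + (t * c) ^ 2) := by
  have hsmall : |t * (y - x)| ≤ t * c := by
    rw [abs_mul, abs_of_nonneg ht]; exact mul_le_mul_of_nonneg_left hxy ht
  have hsq : (t * (y - x)) ^ 2 ≤ (t * c) ^ 2 :=
    sq_le_sq' (abs_le.1 hsmall).1 (abs_le.1 hsmall).2
  have hexp : exp (t * (y - x)) - 1 - t * (y - x) ≤ (t * (y - x)) ^ 2 :=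
    (abs_le.1 (abs_exp_sub_one_sub_id_le (hsmall.trans htc))).2
  calc exp (t * y) = exp (t * x) * exp (t * (y - x)) := by rw [← exp_add]; ring_nf
    _ ≤ exp (t * x) * (1 + t * (y - x) + (t * c) ^ 2) := by gcongr; linarith

lemma le_add_mul_of_sub_le {x : ℕ → ℝ} {c : ℝ} (h : ∀ n, x (n + 1) - x n ≤ c) (n : ℕ) :
    x n ≤ x 0 + n * c := by
  induction n with
  | zero => simp
  | succ n ih => push_cast; linarith [h n]

namespace MeasureTheory

section StoppedProcess

variable {Ω β : Type*} {u : ℕ → Ω → β} {τ : Ω → ℕ∞} {n : ℕ} {ω : Ω}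

lemma stoppedProcess_add_one_of_lt (h : (n : ℕ∞) < τ ω) :
    stoppedProcess u τ (n + 1) ω = u (n + 1) ω :=
  stoppedProcess_eq_of_le (by exact_mod_cast Order.add_one_le_of_lt h)

lemma stoppedProcess_add_one_of_le (h : τ ω ≤ n) :
    stoppedProcess u τ (n + 1) ω = stoppedProcess u τ n ω := by
  have h' : τ ω ≤ (n + 1 : ℕ) := h.trans (by exact_mod_cast n.le_succ)
  exact (stoppedProcess_eq_of_ge h').trans (stoppedProcess_eq_of_ge h).symm

lemma stoppedProcess_of_eq {k : ℕ} (hk : τ ω = k) (hkn : k ≤ n) :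
    stoppedProcess u τ n ω = u k ω := by
  have h : τ ω ≤ n := by rw [hk]; exact_mod_cast hkn
  refine (stoppedProcess_eq_of_ge h).trans ?_
  simp [hk]

@[simp]
lemma stoppedProcess_zero : stoppedProcess u τ 0 = u 0 :=
  funext fun _ ↦ stoppedProcess_eq_of_le bot_le

lemma exists_le_stoppedProcess_eq (u : ℕ → Ω → β) (τ : Ω → ℕ∞) (n : ℕ) (ω : Ω) :
    ∃ k ≤ n, stoppedProcess u τ n ω = u k ω :=
  ⟨_, WithTop.untopA_le (min_le_left _ _), rfl⟩

end StoppedProcess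

section ConditionalExpectation

variable {Ω : Type*} {m mΩ : MeasurableSpace Ω} {μ : Measure Ω}

lemma ae_condExp_sub_le_of_condExp_le (hm : m ≤ mΩ) [SigmaFinite (μ.trim hm)]
    {f g : Ω → ℝ} {p : Ω → Prop} {ε : ℝ} (hf : Integrable f μ) (hg : StronglyMeasurable[m] g)
    (hg_int : Integrable g μ) (hfg : ∀ᵐ ω ∂μ, p ω → μ[f|m] ω ≤ g ω - ε) :
    ∀ᵐ ω ∂μ, p ω → μ[f - g|m] ω ≤ -ε := by
  filter_upwards [condExp_sub hf hg_int m, hfg] with ω hsub hω hp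
  rw [hsub, condExp_of_stronglyMeasurable hm hg hg_int, Pi.sub_apply]
  linarith [hω hp]

lemma integral_mul_le_of_condExp_le [IsFiniteMeasure μ] (hm : m ≤ mΩ) {f g : Ω → ℝ}
    {b C : ℝ} (hg : StronglyMeasurable[m] g) (hg_nonneg : 0 ≤ g) (hg_bdd : ∀ᵐ ω ∂μ, ‖g ω‖ ≤ C)
    (hf : Integrable f μ) (hfb : ∀ᵐ ω ∂μ, g ω ≠ 0 → μ[f|m] ω ≤ b) :
    ∫ ω, g ω * f ω ∂μ ≤ b * ∫ ω, g ω ∂μ := by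
  have hg_meas : AEStronglyMeasurable g μ := (hg.mono hm).aestronglyMeasurable
  have hpull : μ[g * f|m] =ᵐ[μ] g * μ[f|m] :=
    condExp_stronglyMeasurable_mul_of_bound hm hg hf C hg_bdd
  have hmono : ∀ᵐ ω ∂μ, g ω * μ[f|m] ω ≤ b * g ω := by
    filter_upwards [hfb] with ω hω
    rcases eq_or_ne (g ω) 0 with h0 | h0
    · simp [h0]
    · rw [mul_comm b]; exact mul_le_mul_of_nonneg_left (hω h0) (hg_nonneg ω)
  calc ∫ ω, g ω * f ω ∂μ = ∫ ω, μ[g * f|m] ω ∂μ := (integral_condExp hm).symm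
    _ = ∫ ω, g ω * μ[f|m] ω ∂μ := integral_congr_ae hpull
    _ ≤ ∫ ω, b * g ω ∂μ :=
      integral_mono_ae (integrable_condExp.bdd_mul hg_meas hg_bdd)
        ((Integrable.of_bound hg_meas C hg_bdd).const_mul b) hmono
    _ = b * ∫ ω, g ω ∂μ := integral_const_mul b _

lemma integral_lt_of_ae_lt [IsProbabilityMeasure μ] {f : Ω → ℝ} {a : ℝ}
    (hf : Integrable f μ) (hfa : ∀ᵐ ω ∂μ, f ω < a) : ∫ ω, f ω ∂μ < a := by
  have hgap : 0 < ∫ ω, (a - f ω) ∂μ := by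
    refine (integral_pos_iff_support_of_nonneg_ae ?_ ((integrable_const a).sub hf)).2 ?_
    · filter_upwards [hfa] with ω hω using (sub_pos.2 hω).le
    · rw [measure_congr (ae_eq_univ.2 ?_), measure_univ]
      exacts [one_pos, ae_iff.1 (hfa.mono fun ω hω ↦ (sub_pos.2 hω).ne')]
  rw [integral_sub (integrable_const a) hf] at hgap
  simpa using hgap

end ConditionalExpectation

section ExpStoppedProcess

variable {Ω : Type*} {mΩ : MeasurableSpace Ω} {P : Measure Ω} {ℱ : Filtration ℕ mΩ}
  {M : ℕ → Ω → ℝ} {T : Ω → ℕ∞} {b : ℕ → ℝ} {c t ε : ℝ}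

lemma exp_mul_stoppedProcess_add_one_le (ht : 0 ≤ t) (htc : t * c ≤ 1) {n : ℕ} {ω : Ω}
    (hΔ : |M (n + 1) ω - M n ω| ≤ c) :
    exp (t * stoppedProcess M T (n + 1) ω) ≤ exp (t * stoppedProcess M T n ω) +
      (t * ({ω | (n : ℕ∞) < T ω}.indicator (fun ω ↦ exp (t * M n ω)) ω *
          (M (n + 1) ω - M n ω)) +
        (t * c) ^ 2 * {ω | (n : ℕ∞) < T ω}.indicator (fun ω ↦ exp (t * M n ω)) ω) := by
  by_cases hn : (n : ℕ∞) < T ω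
  · rw [stoppedProcess_add_one_of_lt hn, stoppedProcess_eq_of_le hn.le,
      Set.indicator_of_mem (by exact hn)]
    linarith [exp_mul_le_of_abs_sub_le ht htc hΔ]
  · rw [stoppedProcess_add_one_of_le (not_lt.1 hn), Set.indicator_of_notMem (by exact hn)]
    simp

lemma integrable_exp_mul_stoppedProcess [IsFiniteMeasure P] (hT : IsStoppingTime ℱ T)
    (hM : Adapted ℱ M) (ht : 0 ≤ t) (hb : Monotone b) (hMb : ∀ᵐ ω ∂P, ∀ n, M n ω ≤ b n)
    (n : ℕ) : Integrable (fun ω ↦ exp (t * stoppedProcess M T n ω)) P := by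
  have hmeas :=
    (hM.stronglyAdapted.stronglyMeasurable_stoppedProcess_of_discrete hT n).measurable
  refine .of_bound (measurable_exp.comp (hmeas.const_mul t)).aestronglyMeasurable
    (exp (t * b n)) ?_
  filter_upwards [hMb] with ω hω
  obtain ⟨k, hkn, hk⟩ := exists_le_stoppedProcess_eq M T n ω
  rw [Real.norm_of_nonneg (exp_pos _).le, hk]
  gcongr
  exact (hω k).trans (hb hkn)

lemma integral_exp_mul_stoppedProcess_add_one_le [IsFiniteMeasure P]
    (hT : IsStoppingTime ℱ T) (hM : Adapted ℱ M) (hInt : ∀ n, Integrable (M n) P) (hb : Monotone b)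
    (hMb : ∀ᵐ ω ∂P, ∀ n, M n ω ≤ b n)
    (hDrift : ∀ n : ℕ, ∀ᵐ ω ∂P, (n : ℕ∞) < T ω → P[M (n + 1)|ℱ n] ω ≤ M n ω - ε)
    (hBdd : ∀ n : ℕ, ∀ᵐ ω ∂P, |M (n + 1) ω - M n ω| ≤ c)
    (ht : 0 ≤ t) (htc : t * c ≤ 1) (htε : t * c ^ 2 ≤ ε) (n : ℕ) :
    ∫ ω, exp (t * stoppedProcess M T (n + 1) ω) ∂P ≤
      ∫ ω, exp (t * stoppedProcess M T n ω) ∂P := by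
  set g := {ω | (n : ℕ∞) < T ω}.indicator (fun ω ↦ exp (t * M n ω))
  have hg : StronglyMeasurable[ℱ n] g :=
    (((hM n).const_mul t).exp.indicator (hT.measurableSet_gt n)).stronglyMeasurable
  have hg_nonneg : 0 ≤ g := Set.indicator_nonneg fun ω _ ↦ (exp_pos _).le
  have hg_bdd : ∀ᵐ ω ∂P, ‖g ω‖ ≤ exp (t * b n) := by
    filter_upwards [hMb] with ω hω
    rw [Real.norm_of_nonneg (hg_nonneg ω)]
    refine (Set.indicator_le_self' (fun _ _ ↦ (exp_pos _).le) ω).trans ?_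
    gcongr
    exact hω n
  have hg_meas : AEStronglyMeasurable g P := (hg.mono (ℱ.le n)).aestronglyMeasurable
  have hg_int : Integrable g P := .of_bound hg_meas _ hg_bdd
  have hΔ : Integrable (M (n + 1) - M n) P := (hInt (n + 1)).sub (hInt n)
  have hgΔ_int : Integrable (fun ω ↦ g ω * (M (n + 1) ω - M n ω)) P :=
    hΔ.bdd_mul hg_meas hg_bdd
  have hdrift : ∫ ω, g ω * (M (n + 1) ω - M n ω) ∂P ≤ -ε * ∫ ω, g ω ∂P := by
    refine integral_mul_le_of_condExp_le (f := M (n + 1) - M n) (ℱ.le n) hg hg_nonneg hg_bdd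
      hΔ ?_
    filter_upwards [ae_condExp_sub_le_of_condExp_le (ℱ.le n) (hInt (n + 1))
      (hM n).stronglyMeasurable (hInt n) (hDrift n)] with ω hω hgω
    have hn : ω ∈ {ω | (n : ℕ∞) < T ω} := Set.mem_of_indicator_ne_zero hgω
    exact hω hn
  have hX_int := integrable_exp_mul_stoppedProcess hT hM ht hb hMb
  have hR_int :
      Integrable (fun ω ↦ t * (g ω * (M (n + 1) ω - M n ω)) + (t * c) ^ 2 * g ω) P :=
    (hgΔ_int.const_mul t).add (hg_int.const_mul _)
  have hR : ∫ ω, t * (g ω * (M (n + 1) ω - M n ω)) + (t * c) ^ 2 * g ω ∂P ≤ 0 := by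
    rw [integral_add (hgΔ_int.const_mul t) (hg_int.const_mul _), integral_const_mul,
      integral_const_mul]
    have hc2 : (t * c) ^ 2 ≤ t * ε := by nlinarith
    nlinarith [mul_le_mul_of_nonneg_left hdrift ht, integral_nonneg (μ := P) hg_nonneg]
  calc ∫ ω, exp (t * stoppedProcess M T (n + 1) ω) ∂P
      ≤ ∫ ω, exp (t * stoppedProcess M T n ω) +
          (t * (g ω * (M (n + 1) ω - M n ω)) + (t * c) ^ 2 * g ω) ∂P := by
        refine integral_mono_ae (hX_int _) ((hX_int n).add hR_int) ?_
        filter_upwards [hBdd n] with ω hω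
        exact exp_mul_stoppedProcess_add_one_le ht htc hω
    _ ≤ ∫ ω, exp (t * stoppedProcess M T n ω) ∂P := by
      rw [integral_add (hX_int n) hR_int]; linarith

lemma measure_le_ofReal_integral_exp_mul_stoppedProcess [IsFiniteMeasure P]
    (hTerm : ∀ n : ℕ, ∀ᵐ ω ∂P, T ω = (n : ℕ∞) → 0 ≤ M n ω) (ht : 0 ≤ t) {n : ℕ}
    (hX_int : Integrable (fun ω ↦ exp (t * stoppedProcess M T n ω)) P) :
    P {ω | T ω ≤ n} ≤ ENNReal.ofReal (∫ ω, exp (t * stoppedProcess M T n ω) ∂P) := by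
  have hsub : {ω | T ω ≤ n} ≤ᵐ[P] {ω | 1 ≤ exp (t * stoppedProcess M T n ω)} := by
    filter_upwards [ae_all_iff.2 hTerm] with ω hω (hTn : T ω ≤ n)
    obtain ⟨k, hk⟩ :=
      ENat.ne_top_iff_exists.1 (ne_top_of_le_ne_top (ENat.natCast_ne_top n) hTn)
    have hkn : k ≤ n := by rw [← hk] at hTn; exact_mod_cast hTn
    show 1 ≤ exp (t * stoppedProcess M T n ω)
    rw [stoppedProcess_of_eq hk.symm hkn]
    exact one_le_exp (mul_nonneg ht (hω k hk.symm))
  calc P {ω | T ω ≤ n}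
      ≤ P {ω | 1 ≤ exp (t * stoppedProcess M T n ω)} := measure_mono_ae hsub
    _ = ENNReal.ofReal (P.real {ω | 1 ≤ exp (t * stoppedProcess M T n ω)}) :=
      (ofReal_measureReal).symm
    _ ≤ ENNReal.ofReal (∫ ω, exp (t * stoppedProcess M T n ω) ∂P) := by
      gcongr
      simpa using mul_meas_ge_le_integral_of_nonneg
        (ae_of_all _ fun ω ↦ (exp_pos _).le) hX_int 1

lemma measure_ne_top_le_ofReal_integral_exp_mul [IsFiniteMeasure P]
    (hT : IsStoppingTime ℱ T) (hM : Adapted ℱ M) (hInt : ∀ n, Integrable (M n) P) (hb : Monotone b)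
    (hMb : ∀ᵐ ω ∂P, ∀ n, M n ω ≤ b n)
    (hTerm : ∀ n : ℕ, ∀ᵐ ω ∂P, T ω = (n : ℕ∞) → 0 ≤ M n ω)
    (hDrift : ∀ n : ℕ, ∀ᵐ ω ∂P, (n : ℕ∞) < T ω → P[M (n + 1)|ℱ n] ω ≤ M n ω - ε)
    (hBdd : ∀ n : ℕ, ∀ᵐ ω ∂P, |M (n + 1) ω - M n ω| ≤ c)
    (ht : 0 ≤ t) (htc : t * c ≤ 1) (htε : t * c ^ 2 ≤ ε) :
    P {ω | T ω ≠ ⊤} ≤ ENNReal.ofReal (∫ ω, exp (t * M 0 ω) ∂P) := by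
  have hX_int := integrable_exp_mul_stoppedProcess hT hM ht hb hMb
  have hanti : Antitone fun n ↦ ∫ ω, exp (t * stoppedProcess M T n ω) ∂P :=
    antitone_nat_of_succ_le
      (integral_exp_mul_stoppedProcess_add_one_le hT hM hInt hb hMb hDrift hBdd ht htc htε)
  have hunion : {ω | T ω ≠ ⊤} = ⋃ n : ℕ, {ω | T ω ≤ n} := by
    ext ω
    simp only [Set.mem_ofPred_eq, Set.mem_iUnion]
    exact ⟨fun h ↦ ⟨(T ω).toNat, (ENat.natCast_toNat h).ge⟩,
      fun ⟨n, hn⟩ ↦ ne_top_of_le_ne_top (ENat.natCast_ne_top n) hn⟩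
  have hmono : Monotone fun n : ℕ ↦ {ω | T ω ≤ n} :=
    fun m n hmn ω (hω : T ω ≤ m) ↦ hω.trans (by exact_mod_cast hmn)
  rw [hunion, hmono.measure_iUnion]
  refine iSup_le fun n ↦ (measure_le_ofReal_integral_exp_mul_stoppedProcess hTerm ht
    (hX_int n)).trans (ENNReal.ofReal_le_ofReal ?_)
  simpa using hanti n.zero_le

end ExpStoppedProcess

end MeasureTheory

/-- **Repulsing-AST Rule.** If `(M n)` is an adapted integrable process, `T` a stopping
time, and there are constants `ε > 0` and `c > 0` such that `M 0 < 0` a.s., `M n ≥ 0` a.e.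
on `{T = n}`, the conditional expectation decreases by at least `ε` on `{T > n}`, and the
differences are bounded by `c` a.s., then `P(T = ∞) > 0` (termination is not almost sure). -/
theorem repulsing_ast_rule
    {Ω : Type*} {mΩ : MeasurableSpace Ω} {P : Measure Ω} [IsProbabilityMeasure P]
    (ℱ : Filtration ℕ mΩ) (M : ℕ → Ω → ℝ) (T : Ω → ℕ∞)
    (hAdapted : Adapted ℱ M) (hInt : ∀ n, Integrable (M n) P)
    (hStop : ∀ n : ℕ, MeasurableSet[ℱ n] {ω | T ω ≤ (n : ℕ∞)})
    (ε c : ℝ) (hε : 0 < ε) (hc : 0 < c)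
    (hNeg : ∀ᵐ ω ∂P, M 0 ω < 0)
    (hTerm : ∀ n : ℕ, ∀ᵐ ω ∂P, T ω = (n : ℕ∞) → 0 ≤ M n ω)
    (hDrift : ∀ n : ℕ, ∀ᵐ ω ∂P, (n : ℕ∞) < T ω →
      (P[M (n + 1)|ℱ n]) ω ≤ M n ω - ε)
    (hBdd : ∀ n : ℕ, ∀ᵐ ω ∂P, |M (n + 1) ω - M n ω| < c) :
    0 < P {ω | T ω = ⊤} := by
  set t := min (1 / c) (ε / c ^ 2)
  have ht : 0 < t := lt_min (by positivity) (by positivity)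
  have htc : t * c ≤ 1 := (le_div_iff₀ hc).1 (min_le_left _ _)
  have htε : t * c ^ 2 ≤ ε := (le_div_iff₀ (by positivity)).1 (min_le_right _ _)
  have hBdd' n : ∀ᵐ ω ∂P, |M (n + 1) ω - M n ω| ≤ c := (hBdd n).mono fun _ h ↦ h.le
  have hb : Monotone fun n : ℕ ↦ (n : ℝ) * c := fun m n hmn ↦
    mul_le_mul_of_nonneg_right (Nat.cast_le.2 hmn) hc.le
  have hMb : ∀ᵐ ω ∂P, ∀ n : ℕ, M n ω ≤ n * c := by
    filter_upwards [hNeg, ae_all_iff.2 hBdd'] with ω h0 hω n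
    linarith [le_add_mul_of_sub_le (x := fun k ↦ M k ω) (fun k ↦ (abs_le.1 (hω k)).2) n]
  have hlt : ∫ ω, exp (t * M 0 ω) ∂P < 1 := by
    refine integral_lt_of_ae_lt ?_
      (hNeg.mono fun ω h ↦ exp_lt_one_iff.2 (mul_neg_of_pos_of_neg ht h))
    simpa using integrable_exp_mul_stoppedProcess hStop hAdapted ht.le hb hMb 0
  have hfin : P {ω | T ω ≠ ⊤} < 1 :=
    (measure_ne_top_le_ofReal_integral_exp_mul hStop hAdapted hInt hb hMb
      hTerm hDrift hBdd' ht.le htc htε).trans_lt (ENNReal.ofReal_lt_one.2 hlt)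
  refine pos_iff_ne_zero.2 fun h0 ↦ hfin.ne ?_
  rw [measure_congr (ae_eq_univ.2 (by simpa [Set.compl_ofPred] using h0)), measure_univ]
end

section
/- Repulsing-PAST Rule: Let (M_n)_{n∈ℕ} be an adapted, integrable real-valued process on a filtered probability space and T a stopping time. Suppose there is a constant c > 0 such that: (i) M_0 < 0 P-almost surely; (ii) for every n ∈ ℕ, M_n ≥ 0 P-almost everywhere on the event {T = n}; (iii) for every n ∈ ℕ, E(M_{n+1} | ℱ_n) ≤ M_n P-almost everywhere on {T > n}; and (iv) for every n ∈ ℕ, |M_{n+1} − M_n| < c P-almost surely. Then E(T) = ∞, i.e. termination is not positive almost sure. -/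
open MeasureTheory Filter
open scoped ENNReal

/-- **Repulsing-PAST Rule.** If `(M n)` is an adapted integrable process, `T` a stopping
time, and there is a constant `c > 0` such that `M 0 < 0` a.s., `M n ≥ 0` a.e. on
`{T = n}`, `(M n)` is a supermartingale on `{T > n}`, and the differences are bounded by
`c` a.s., then `E(T) = ∞` (termination is not positive almost sure). -/
theorem repulsing_past_rule
    {Ω : Type*} {mΩ : MeasurableSpace Ω} {P : Measure Ω} [IsProbabilityMeasure P]
    (ℱ : Filtration ℕ mΩ) (M : ℕ → Ω → ℝ) (T : Ω → ℕ∞)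
    (hAdapted : Adapted ℱ M) (hInt : ∀ n, Integrable (M n) P)
    (hStop : ∀ n : ℕ, MeasurableSet[ℱ n] {ω | T ω ≤ (n : ℕ∞)})
    (c : ℝ) (hc : 0 < c)
    (hNeg : ∀ᵐ ω ∂P, M 0 ω < 0)
    (hTerm : ∀ n : ℕ, ∀ᵐ ω ∂P, T ω = (n : ℕ∞) → 0 ≤ M n ω)
    (hSM : ∀ n : ℕ, ∀ᵐ ω ∂P, (n : ℕ∞) < T ω → (P[M (n + 1)|ℱ n]) ω ≤ M n ω)
    (hBdd : ∀ n : ℕ, ∀ᵐ ω ∂P, |M (n + 1) ω - M n ω| < c) :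
    (∫⁻ ω, (T ω : ℝ≥0∞) ∂P) = ⊤ := by
  by_contra hT
  -- T is measurable
  have hle : ∀ n : ℕ, MeasurableSet {ω | T ω ≤ (n : ℕ∞)} := fun n => ℱ.le n _ (hStop n)
  have hTmeas : Measurable T := by
    apply measurable_to_countable'
    intro x
    induction x using ENat.recTopCoe with
    | top =>
      have : T ⁻¹' {⊤} = ⋂ n : ℕ, {ω | T ω ≤ (n : ℕ∞)}ᶜ := by
        ext ω
        simp only [Set.mem_preimage, Set.mem_singleton_iff, Set.mem_iInter, Set.mem_compl_iff,
          Set.mem_setOf_eq, not_le]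
        constructor
        · intro h n; simp [h]
        · intro h
          by_contra hne
          exact absurd (le_of_eq (ENat.coe_toNat hne).symm) (not_le.mpr (h _))
      rw [this]; exact MeasurableSet.iInter fun n => (hle n).compl
    | coe n =>
      match n with
      | 0 =>
        have : T ⁻¹' {((0:ℕ) : ℕ∞)} = {ω | T ω ≤ ((0:ℕ) : ℕ∞)} := by
          ext ω; simp [le_zero_iff]
        rw [this]; exact hle 0
      | (m+1) =>
        have : T ⁻¹' {((m+1 : ℕ) : ℕ∞)} = {ω | T ω ≤ ((m+1 : ℕ) : ℕ∞)} ∩ {ω | T ω ≤ (m : ℕ∞)}ᶜ := by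
          ext ω
          simp only [Set.mem_preimage, Set.mem_singleton_iff, Set.mem_inter_iff, Set.mem_compl_iff,
            Set.mem_setOf_eq, not_le]
          constructor
          · intro h; constructor
            · exact le_of_eq h
            · rw [h]; exact_mod_cast Nat.lt_succ_self m
          · rintro ⟨h1, h2⟩
            have := (ENat.add_one_le_iff (by exact_mod_cast ENat.coe_ne_top m)).mpr h2
            exact le_antisymm h1 (by exact_mod_cast this)
        rw [this]; exact (hle _).inter (hle m).compl
  have hTENN : Measurable fun ω => (T ω : ℝ≥0∞) := by
    exact (measurable_from_top).comp hTmeas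
  -- a.e. T < ∞
  have hTfin : ∀ᵐ ω ∂P, T ω ≠ ⊤ := by
    filter_upwards [ae_lt_top hTENN hT] with ω hω
    intro h
    rw [h] at hω
    simp at hω
  set τ : Ω → ℕ := fun ω => (T ω).toNat with hτdef
  have hτmeas : Measurable τ := (measurable_from_top (f := ENat.toNat)).comp hTmeas
  -- the stopped process
  set Y : ℕ → Ω → ℝ := fun n ω => M (min n (τ ω)) ω with hYdef
  have hYint : ∀ n, Integrable (Y n) P := by
    intro n
    have heq : Y n = fun ω => ∑ k ∈ Finset.range (n+1),
        Set.indicator {ω' | min n (τ ω') = k} (M k) ω := by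
      funext ω
      rw [Finset.sum_eq_single (min n (τ ω))]
      · simp [Set.indicator_of_mem, Set.mem_setOf_eq, hYdef]
      · intro k _ hk
        apply Set.indicator_of_notMem
        intro h
        simp only [Set.mem_setOf_eq] at h
        exact hk h.symm
      · intro h
        exact absurd (Finset.mem_range.mpr (Nat.lt_succ_of_le (min_le_left _ _))) h
    rw [heq]
    apply integrable_finset_sum
    intro k _
    exact (hInt k).indicator
      (hτmeas (show MeasurableSet {j : ℕ | min n j = k} from trivial))
  have hYmeas : ∀ n, AEStronglyMeasurable (Y n) P := fun n => (hYint n).1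
  -- key supermartingale step
  have hkey : ∀ n, ∫ ω, Y (n+1) ω ∂P ≤ ∫ ω, Y n ω ∂P := by
    intro n
    set A : Set Ω := {ω | (n : ℕ∞) < T ω} with hAdef
    have hA_f : MeasurableSet[ℱ n] A := by
      have : A = {ω | T ω ≤ (n : ℕ∞)}ᶜ := by
        ext ω; simp [hAdef, not_le]
      rw [this]; exact (hStop n).compl
    have hA : MeasurableSet A := ℱ.le n _ hA_f
    have hdiff : ∀ᵐ ω ∂P, Y (n+1) ω
        = Y n ω + A.indicator (fun ω' => M (n+1) ω' - M n ω') ω := by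
      filter_upwards [hTfin] with ω hω
      by_cases hcase : n < τ ω
      · have hmem : ω ∈ A := by
          rw [hAdef, Set.mem_setOf_eq, ← ENat.coe_toNat hω]
          exact_mod_cast hcase
        rw [Set.indicator_of_mem hmem]
        have h1 : min (n+1) (τ ω) = n+1 := min_eq_left hcase
        have h2 : min n (τ ω) = n := min_eq_left (le_of_lt hcase)
        simp [hYdef, h1, h2]
      · push_neg at hcase
        have hmem : ω ∉ A := by
          rw [hAdef, Set.mem_setOf_eq, ← ENat.coe_toNat hω, not_lt]
          exact_mod_cast hcase
        rw [Set.indicator_of_notMem hmem]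
        have h1 : min (n+1) (τ ω) = τ ω := min_eq_right (le_trans hcase (Nat.le_succ n))
        have h2 : min n (τ ω) = τ ω := min_eq_right hcase
        simp [hYdef, h1, h2]
    have hIndInt : Integrable (A.indicator (fun ω' => M (n+1) ω' - M n ω')) P :=
      ((hInt (n+1)).sub (hInt n)).indicator hA
    calc ∫ ω, Y (n+1) ω ∂P
        = ∫ ω, (Y n ω + A.indicator (fun ω' => M (n+1) ω' - M n ω') ω) ∂P :=
          integral_congr_ae hdiff
      _ = (∫ ω, Y n ω ∂P) + ∫ ω, A.indicator (fun ω' => M (n+1) ω' - M n ω') ω ∂P :=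
          integral_add (hYint n) hIndInt
      _ = (∫ ω, Y n ω ∂P) + ∫ ω in A, (M (n+1) ω - M n ω) ∂P := by
          rw [integral_indicator hA]
      _ = (∫ ω, Y n ω ∂P) + ((∫ ω in A, M (n+1) ω ∂P) - ∫ ω in A, M n ω ∂P) := by
          rw [integral_sub ((hInt (n+1)).integrableOn) ((hInt n).integrableOn)]
      _ ≤ ∫ ω, Y n ω ∂P := by
          have h1 : (∫ ω in A, M (n+1) ω ∂P) = ∫ ω in A, (P[M (n+1)|ℱ n]) ω ∂P :=
            (setIntegral_condExp (ℱ.le n) (hInt (n+1)) hA_f).symm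
          have h2 : (∫ ω in A, (P[M (n+1)|ℱ n]) ω ∂P) ≤ ∫ ω in A, M n ω ∂P := by
            apply setIntegral_mono_ae_restrict integrable_condExp.integrableOn
              ((hInt n).integrableOn)
            exact (ae_restrict_iff' hA).2 (hSM n)
          linarith
  have hY0 : (∫ ω, Y 0 ω ∂P) = ∫ ω, M 0 ω ∂P := by
    apply integral_congr_ae
    filter_upwards with ω
    simp [hYdef]
  have hleM0 : ∀ n, ∫ ω, Y n ω ∂P ≤ ∫ ω, M 0 ω ∂P := by
    intro n
    induction n with
    | zero => exact le_of_eq hY0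
    | succ k ih => exact le_trans (hkey k) ih
  -- ∫ M 0 < 0
  have hM0neg : (∫ ω, M 0 ω ∂P) < 0 := by
    have hnn : 0 ≤ᵐ[P] fun ω => -M 0 ω := by
      filter_upwards [hNeg] with ω hω
      simp only [Pi.zero_apply]
      linarith
    have hsub : {ω | M 0 ω < 0} ⊆ Function.support fun ω => -M 0 ω := by
      intro ω hω
      simp only [Function.mem_support, neg_ne_zero]
      exact ne_of_lt hω
    have h1 : P {ω | M 0 ω < 0}ᶜ = 0 := by
      have := ae_iff.mp hNeg
      simpa [Set.compl_setOf] using this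
    have hpos : 0 < ∫ ω, -M 0 ω ∂P := by
      rw [integral_pos_iff_support_of_nonneg_ae hnn (hInt 0).neg, pos_iff_ne_zero]
      intro h0
      have huniv : P Set.univ ≤ 0 := by
        calc P Set.univ ≤ P ((Function.support fun ω => -M 0 ω) ∪ {ω | M 0 ω < 0}ᶜ) := by
              apply measure_mono
              intro ω _
              by_cases hω : M 0 ω < 0
              · exact Or.inl (hsub hω)
              · exact Or.inr hω
          _ ≤ P (Function.support fun ω => -M 0 ω) + P {ω | M 0 ω < 0}ᶜ :=
              measure_union_le _ _
          _ = 0 := by rw [h0, h1, add_zero]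
      rw [measure_univ] at huniv
      simp at huniv
    rw [integral_neg] at hpos
    linarith
  -- integrable real-valued τ
  have hτint : Integrable (fun ω => (τ ω : ℝ)) P := by
    refine ⟨(measurable_from_top.comp hτmeas).aestronglyMeasurable, ?_⟩
    show (∫⁻ ω, (‖((τ ω : ℝ))‖₊ : ℝ≥0∞) ∂P) < ⊤
    calc ∫⁻ ω, (‖((τ ω : ℝ))‖₊ : ℝ≥0∞) ∂P ≤ ∫⁻ ω, (T ω : ℝ≥0∞) ∂P := by
          apply lintegral_mono
          intro ω
          show (‖((τ ω : ℝ))‖₊ : ℝ≥0∞) ≤ (T ω : ℝ≥0∞)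
          have h1 : (‖((τ ω : ℝ))‖₊ : ℝ≥0∞) = ((τ ω : ℕ∞) : ℝ≥0∞) := by
            simp [Real.nnnorm_natCast]
          rw [h1]
          exact_mod_cast ENat.toENNReal_le.mpr (ENat.coe_toNat_le_self (T ω))
      _ < ⊤ := lt_top_iff_ne_top.mpr hT

  -- dominated convergence
  set Z : Ω → ℝ := fun ω => M (τ ω) ω with hZdef
  have hBdd' : ∀ᵐ ω ∂P, ∀ k, |M (k+1) ω - M k ω| ≤ c := by
    rw [ae_all_iff]; intro k
    filter_upwards [hBdd k] with ω hω using le_of_lt hω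
  have hgrow : ∀ᵐ ω ∂P, ∀ m, |M m ω| ≤ |M 0 ω| + m * c := by
    filter_upwards [hBdd'] with ω hω
    intro m
    induction m with
    | zero => simp
    | succ k ih =>
      have := hω k
      have h2 : |M (k+1) ω| ≤ |M k ω| + c := by
        calc |M (k+1) ω| = |M k ω + (M (k+1) ω - M k ω)| := by ring_nf
          _ ≤ |M k ω| + |M (k+1) ω - M k ω| := abs_add_le _ _
          _ ≤ |M k ω| + c := by linarith
      push_cast
      push_cast at ih
      linarith
  have hbound : ∀ n, ∀ᵐ ω ∂P, ‖Y n ω‖ ≤ |M 0 ω| + c * (τ ω : ℝ) := by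
    intro n
    filter_upwards [hgrow] with ω hω
    calc ‖Y n ω‖ = |M (min n (τ ω)) ω| := rfl
      _ ≤ |M 0 ω| + (min n (τ ω)) * c := hω _
      _ ≤ |M 0 ω| + c * (τ ω : ℝ) := by
          have : ((min n (τ ω) : ℕ) : ℝ) ≤ (τ ω : ℝ) := by
            exact_mod_cast Nat.cast_le.mpr (min_le_right _ _)
          nlinarith
  have hboundInt : Integrable (fun ω => |M 0 ω| + c * (τ ω : ℝ)) P :=
    (hInt 0).abs.add (hτint.const_mul c)
  have hlim : ∀ᵐ ω ∂P, Tendsto (fun n => Y n ω) atTop (nhds (Z ω)) := by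
    filter_upwards [hTfin] with ω hω
    apply tendsto_atTop_of_eventually_const (i₀ := τ ω)
    intro n hn
    simp [hYdef, hZdef, min_eq_right hn]
  have hTendsto : Tendsto (fun n => ∫ ω, Y n ω ∂P) atTop (nhds (∫ ω, Z ω ∂P)) :=
    tendsto_integral_of_dominated_convergence _ hYmeas hboundInt hbound hlim
  have hZle : (∫ ω, Z ω ∂P) ≤ ∫ ω, M 0 ω ∂P :=
    le_of_tendsto hTendsto (Eventually.of_forall hleM0)
  have hZnonneg : 0 ≤ ∫ ω, Z ω ∂P := by
    apply integral_nonneg_of_ae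
    have hTerm' : ∀ᵐ ω ∂P, ∀ n : ℕ, T ω = (n : ℕ∞) → 0 ≤ M n ω := ae_all_iff.mpr hTerm
    filter_upwards [hTfin, hTerm'] with ω h1 h2
    exact h2 (τ ω) (ENat.coe_toNat h1).symm
  linarith
end

section
/- Relaxed Supermartingale Rule (Theorem 5, second part): Let (M_n)_{n∈ℕ} be an adapted, integrable real-valued process on a filtered probability space with M_n ≥ 0 P-almost surely for every n, and let T be a stopping time. Suppose there are constants p ∈ (0,1], d > 0 and an index i₀ ∈ ℕ such that for every n ≥ i₀, P-almost everywhere on {T > n}: (i) M_n > 0; (ii) P(M_{n+1} − M_n ≤ −d | ℱ_n) ≥ p; and (iii) E(M_{n+1} | ℱ_n) ≤ M_n. Then P(T < ∞) = 1 (almost sure termination). -/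
/-!
The conditions hold only from time `i₀` on, so we pass to the process `M (i₀ + ·)`, the shifted
filtration and the stopping time `T - i₀`. The supermartingale condition on `{T > n}` makes the
stopped process a nonnegative supermartingale, which converges almost surely. On `{T = ∞}` this
stopped process is `M` itself, so its increments tend to `0`. But there the conditional probability
of a drop by at least `d` is eventually at least `p`, so by Lévy's extension of the Borel–Cantelli
lemma such drops happen infinitely often. Hence `{T = ∞}` is null.
-/

open MeasureTheory Filter
open scoped Topology

theorem tendsto_sum_range_atTop_of_eventually_ge {u : ℕ → ℝ} {p : ℝ} (hp : 0 < p)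
    (hu : ∀ n, 0 ≤ u n) (h : ∀ᶠ n in atTop, p ≤ u n) :
    Tendsto (fun n => ∑ k ∈ Finset.range n, u k) atTop atTop := by
  refine (not_summable_iff_tendsto_nat_atTop_of_nonneg hu).1 fun hsum => ?_
  obtain ⟨n, hpn, hnp⟩ := (h.and (hsum.tendsto_atTop_zero.eventually (gt_mem_nhds hp))).exists
  exact hnp.not_ge hpn

theorem Filter.Tendsto.eventually_neg_lt_sub_pred {u : ℕ → ℝ} {c d : ℝ}
    (hu : Tendsto u atTop (𝓝 c)) (hd : 0 < d) : ∀ᶠ n in atTop, -d < u n - u (n - 1) := by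
  have h : Tendsto (fun n => u n - u (n - 1)) atTop (𝓝 0) := by
    simpa using hu.sub (hu.comp (tendsto_sub_atTop_nat 1))
  exact h.eventually (lt_mem_nhds (neg_lt_zero.2 hd))

namespace MeasureTheory

variable {Ω : Type*} {m0 : MeasurableSpace Ω} {μ : Measure Ω} {ℱ : Filtration ℕ m0}

def Filtration.shift (ℱ : Filtration ℕ m0) (k : ℕ) : Filtration ℕ m0 where
  seq n := ℱ (k + n)
  mono' _ _ h := ℱ.mono (Nat.add_le_add_left h k)
  le' n := ℱ.le (k + n)

theorem IsStoppingTime.shift {T : Ω → ℕ∞} (hT : IsStoppingTime ℱ T) (k : ℕ) :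
    IsStoppingTime (ℱ.shift k) (fun ω => T ω - (k : ℕ∞)) := fun n => by
  have h : {ω | T ω - k ≤ n} = {ω | T ω ≤ (k + n : ℕ)} := by
    ext ω
    simp [tsub_le_iff_right, add_comm]
  exact h ▸ hT (k + n)

theorem stoppedProcess_add_one {β : Type*} [AddCommGroup β] (u : ℕ → Ω → β) (T : Ω → ℕ∞) (n : ℕ) :
    stoppedProcess u T (n + 1) =
      stoppedProcess u T n + {ω | (n : ℕ∞) < T ω}.indicator (u (n + 1) - u n) := by
  ext ω
  by_cases h : (n : ℕ∞) < T ω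
  · have h' : ((n + 1 : ℕ) : ℕ∞) ≤ T ω := Order.add_one_le_of_lt h
    simp [stoppedProcess_eq_of_le h', stoppedProcess_eq_of_le h.le, h]
  · rw [not_lt] at h
    have h' : T ω ≤ ((n + 1 : ℕ) : ℕ∞) := h.trans (by norm_cast; omega)
    simp [stoppedProcess_eq_of_ge h, stoppedProcess_eq_of_ge h', h.not_gt]

theorem supermartingale_stoppedProcess_of_condExp_le [IsFiniteMeasure μ] {M : ℕ → Ω → ℝ}
    {T : Ω → ℕ∞} (hadp : Adapted ℱ M) (hint : ∀ n, Integrable (M n) μ)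
    (hT : IsStoppingTime ℱ T) (hle : ∀ n : ℕ, ∀ᵐ ω ∂μ, (n : ℕ∞) < T ω → μ[M (n + 1)|ℱ n] ω ≤ M n ω) :
    Supermartingale (stoppedProcess M T) ℱ μ := by
  have hX := hadp.stronglyAdapted.stoppedProcess_of_discrete hT
  have hXint := integrable_stoppedProcess hT hint
  refine supermartingale_nat hX hXint fun n => ?_
  have hS : MeasurableSet[ℱ n] {ω | (n : ℕ∞) < T ω} := hT.measurableSet_gt n
  have hΔ : Integrable (M (n + 1) - M n) μ := (hint (n + 1)).sub (hint n)
  rw [stoppedProcess_add_one]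
  filter_upwards [condExp_add (hXint n) (hΔ.indicator (ℱ.le n _ hS)) (ℱ n),
    condExp_indicator hΔ hS, condExp_sub (hint (n + 1)) (hint n) (ℱ n), hle n]
    with ω hadd hind hsub hω
  rw [hadd, Pi.add_apply, condExp_of_stronglyMeasurable (ℱ.le n) (hX n) (hXint n), hind]
  by_cases h : (n : ℕ∞) < T ω
  · simpa [h, hsub, condExp_of_stronglyMeasurable (ℱ.le n) (hadp n).stronglyMeasurable (hint n)]
      using hω h
  · simp [h]

theorem Supermartingale.exists_ae_tendsto_of_nonneg [IsFiniteMeasure μ] {f : ℕ → Ω → ℝ}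
    (hf : Supermartingale f ℱ μ) (hnn : ∀ n, 0 ≤ᵐ[μ] f n) :
    ∀ᵐ ω ∂μ, ∃ c, Tendsto (fun n => f n ω) atTop (𝓝 c) := by
  have hbdd : ∀ n, eLpNorm ((-f) n) 1 μ ≤ (∫ ω, f 0 ω ∂μ).toNNReal := fun n => by
    have hint : ∫ ω, f n ω ∂μ ≤ ∫ ω, f 0 ω ∂μ := by
      simpa using hf.setIntegral_le (Nat.zero_le n) MeasurableSet.univ
    rw [Pi.neg_apply, eLpNorm_neg, eLpNorm_one_eq_lintegral_enorm,
      ← ofReal_integral_norm_eq_lintegral_enorm (hf.integrable n),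
      integral_congr_ae ((hnn n).mono fun ω hω => Real.norm_of_nonneg hω)]
    exact ENNReal.ofReal_le_ofReal hint
  filter_upwards [hf.neg.exists_ae_tendsto_of_bdd hbdd] with ω ⟨c, hc⟩
  exact ⟨-c, by simpa using hc.neg⟩

theorem ae_frequently_mem_of_eventually_le_condExp_indicator [IsFiniteMeasure μ]
    {s : ℕ → Set Ω} (hs : ∀ n, MeasurableSet[ℱ n] (s n)) {p : ℝ} (hp : 0 < p) :
    ∀ᵐ ω ∂μ, (∀ᶠ n in atTop, p ≤ μ[(s (n + 1)).indicator 1|ℱ n] ω) →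
      ∃ᶠ n in atTop, ω ∈ s n := by
  have hnn : ∀ᵐ ω ∂μ, ∀ n, 0 ≤ μ[(s (n + 1)).indicator (1 : Ω → ℝ)|ℱ n] ω :=
    ae_all_iff.2 fun n => condExp_nonneg (Eventually.of_forall
      (Set.indicator_nonneg fun _ _ => zero_le_one))
  filter_upwards [ae_mem_limsup_atTop_iff μ hs, hnn] with ω hlimsup hnn hev
  rw [← mem_limsup_iff_frequently_mem, hlimsup]
  exact tendsto_sum_range_atTop_of_eventually_ge hp hnn hev

end MeasureTheory

theorem relaxed_supermartingale_rule_general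
    {Ω : Type*} {mΩ : MeasurableSpace Ω} {P : Measure Ω} [IsProbabilityMeasure P]
    (ℱ : Filtration ℕ mΩ) (M : ℕ → Ω → ℝ) (T : Ω → ℕ∞)
    (hAdapted : Adapted ℱ M) (hInt : ∀ n, Integrable (M n) P)
    (hNonneg : ∀ n : ℕ, ∀ᵐ ω ∂P, 0 ≤ M n ω)
    (hStop : ∀ n : ℕ, MeasurableSet[ℱ n] {ω | T ω ≤ (n : ℕ∞)})
    (p d : ℝ) (hp0 : 0 < p) (hd : 0 < d) (i₀ : ℕ)
    (hDec : ∀ n : ℕ, i₀ ≤ n → ∀ᵐ ω ∂P, (n : ℕ∞) < T ω →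
      p ≤ (P[Set.indicator {ω' | M (n + 1) ω' - M n ω' ≤ -d} (fun _ => (1 : ℝ))|ℱ n]) ω)
    (hSM : ∀ n : ℕ, i₀ ≤ n → ∀ᵐ ω ∂P, (n : ℕ∞) < T ω →
      (P[M (n + 1)|ℱ n]) ω ≤ M n ω) :
    P {ω | T ω < ⊤} = 1 := by
  set X := stoppedProcess (fun n => M (i₀ + n)) (fun ω => T ω - (i₀ : ℕ∞))
  have hX : Supermartingale X (ℱ.shift i₀) P :=
    supermartingale_stoppedProcess_of_condExp_le (fun n => hAdapted (i₀ + n))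
      (fun n => hInt (i₀ + n)) (IsStoppingTime.shift hStop i₀) fun n => by
        filter_upwards [hSM (i₀ + n) (Nat.le_add_right i₀ n)] with ω h hn
        exact h (by exact_mod_cast lt_tsub_iff_left.1 hn)
  have hconv := hX.exists_ae_tendsto_of_nonneg fun n => by
    filter_upwards [ae_all_iff.2 hNonneg] with ω h using h _
  -- a drop into time `n`; for `n + 1` the index `n + 1 - 1` reduces to `n`, matching `hDec n`
  have hdropMeas : ∀ n, MeasurableSet[ℱ n] {ω | M n ω - M (n - 1) ω ≤ -d} := fun n =>
    measurableSet_le ((hAdapted n).sub ((hAdapted (n - 1)).mono (ℱ.mono (Nat.sub_le n 1)) le_rfl))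
      measurable_const
  have hdrops := ae_frequently_mem_of_eventually_le_condExp_indicator (μ := P) hdropMeas hp0
  have hDecAll := ae_all_iff.2 fun n => eventually_imp_distrib_left.2 (hDec n)
  have hfinite : ∀ᵐ ω ∂P, T ω < ⊤ := by
    filter_upwards [hconv, hdrops, hDecAll] with ω ⟨c, hc⟩ hdropω hDecω
    refine lt_top_iff_ne_top.2 fun hT => ?_
    have hXM : ∀ n, X n ω = M (i₀ + n) ω := fun n =>
      stoppedProcess_eq_of_le (by rw [hT, ENat.top_sub_natCast]; exact le_top)
    have hM : Tendsto (fun n => M n ω) atTop (𝓝 c) :=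
      (tendsto_add_atTop_iff_nat i₀).1 (by simpa [hXM, add_comm] using hc)
    have hfreq := hdropω ((eventually_ge_atTop i₀).mono fun n hn => hDecω n hn (by simp [hT]))
    obtain ⟨n, hlt, hle⟩ := ((hM.eventually_neg_lt_sub_pred hd).and_frequently hfreq).exists
    exact hle.not_gt hlt
  rw [measure_congr ((ae_eq_univ (s := {ω | T ω < ⊤})).2 (ae_iff.1 hfinite)), measure_univ]

/-- **Relaxed Supermartingale Rule.** If `(M n)` is an adapted integrable a.s. nonnegative
process, `T` a stopping time, and there are constants `p ∈ (0,1]`, `d > 0` and an index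
`i₀ ∈ ℕ` such that for every `n ≥ i₀`, a.e. on `{T > n}` the process is positive,
decreases by at least `d` with conditional probability at least `p`, and is a
supermartingale, then `P(T < ∞) = 1` (almost sure termination). -/
theorem relaxed_supermartingale_rule
    {Ω : Type*} {mΩ : MeasurableSpace Ω} {P : Measure Ω} [IsProbabilityMeasure P]
    (ℱ : Filtration ℕ mΩ) (M : ℕ → Ω → ℝ) (T : Ω → ℕ∞)
    (hAdapted : Adapted ℱ M) (hInt : ∀ n, Integrable (M n) P)
    (hNonneg : ∀ n : ℕ, ∀ᵐ ω ∂P, 0 ≤ M n ω)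
    (hStop : ∀ n : ℕ, MeasurableSet[ℱ n] {ω | T ω ≤ (n : ℕ∞)})
    (p d : ℝ) (hp0 : 0 < p) (hp1 : p ≤ 1) (hd : 0 < d) (i₀ : ℕ)
    (hPos : ∀ n : ℕ, i₀ ≤ n → ∀ᵐ ω ∂P, (n : ℕ∞) < T ω → 0 < M n ω)
    (hDec : ∀ n : ℕ, i₀ ≤ n → ∀ᵐ ω ∂P, (n : ℕ∞) < T ω →
      p ≤ (P[Set.indicator {ω' | M (n + 1) ω' - M n ω' ≤ -d} (fun _ => (1 : ℝ))|ℱ n]) ω)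
    (hSM : ∀ n : ℕ, i₀ ≤ n → ∀ᵐ ω ∂P, (n : ℕ∞) < T ω →
      (P[M (n + 1)|ℱ n]) ω ≤ M n ω) :
    P {ω | T ω < ⊤} = 1 :=
  relaxed_supermartingale_rule_general ℱ M T hAdapted hInt hNonneg hStop p d hp0 hd i₀ hDec hSM
end

section
/- Relaxed Repulsing-AST Rule (Theorem 6, first part): Let (M_n)_{n∈ℕ} be an adapted, integrable real-valued process on a filtered probability space and T a stopping time. Suppose there are constants ε > 0, c > 0 and an index i₀ ∈ ℕ such that: (i) P({M_{i₀} < 0} ∩ {T > i₀}) > 0; (ii) for every n ≥ i₀, M_n ≥ 0 P-almost everywhere on the event {T = n}; (iii) for every n ≥ i₀, E(M_{n+1} | ℱ_n) ≤ M_n − ε P-almost everywhere on {T > n}; and (iv) for every n ≥ i₀, |M_{n+1} − M_n| < c P-almost surely. Then P(T = ∞) > 0, i.e. termination is not almost sure. -/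
/-!
Pick `δ > 0` such that `B = {M i₀ ≤ -δ, T > i₀}` has positive probability, and `l > 0` with
`l * c ≤ 1` and `l * c ^ 2 ≤ ε`. Stop `M` as soon as the loop has stopped or `M` has become
nonnegative, giving a process `V` started at `M i₀`. While the loop runs with `M` negative,
`exp x ≤ 1 + x + x ^ 2` on `[-1, 1]` and the drift give
`E[exp (l * (M (n+1) - M n)) | ℱ n] ≤ 1 - l * ε + l ^ 2 * c ^ 2 ≤ 1`, so `∫ in B, exp (l * V k)`
is nonincreasing and bounded by `exp (-l * δ) * P B`. When the loop has stopped by time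
`i₀ + k`, `V k ≥ 0`, so `P (B ∩ {T ≤ i₀ + k}) ≤ exp (-l * δ) * P B < P B` for every `k`,
and `B ∩ {T = ∞}` has positive probability.
-/

open MeasureTheory Filter Real

section ExponentialMoment

variable {Ω : Type*} {m mΩ : MeasurableSpace Ω} {P : Measure Ω} [IsFiniteMeasure P]

theorem integrable_exp_mul_of_le {D : Ω → ℝ} (hD : AEStronglyMeasurable D P) {c l : ℝ}
    (hl : 0 ≤ l) (hbdd : ∀ᵐ ω ∂P, D ω ≤ c) : Integrable (fun ω => exp (l * D ω)) P := by
  refine .of_bound (continuous_exp.comp_aestronglyMeasurable (hD.const_mul l)) (exp (l * c)) ?_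
  filter_upwards [hbdd] with ω hω
  rw [norm_of_nonneg (exp_pos _).le, exp_le_exp]
  exact mul_le_mul_of_nonneg_left hω hl

theorem condExp_exp_mul_le (hm : m ≤ mΩ) {D : Ω → ℝ} (hD : Integrable D P) {c l : ℝ}
    (hl : 0 ≤ l) (hlc : l * c ≤ 1) (hbdd : ∀ᵐ ω ∂P, |D ω| ≤ c) :
    P[fun ω => exp (l * D ω)|m] ≤ᵐ[P] fun ω => 1 + l ^ 2 * c ^ 2 + l * P[D|m] ω := by
  have hquad : (fun ω => exp (l * D ω)) ≤ᵐ[P] fun ω => 1 + l ^ 2 * c ^ 2 + l * D ω := by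
    filter_upwards [hbdd] with ω hω
    have hlD : |l * D ω| ≤ 1 := by
      rw [abs_mul, abs_of_nonneg hl]
      exact (mul_le_mul_of_nonneg_left hω hl).trans hlc
    have hsq : (l * D ω) ^ 2 ≤ l ^ 2 * c ^ 2 := by
      rw [mul_pow, ← sq_abs (D ω)]
      gcongr
    linarith [le_abs_self (exp (l * D ω) - 1 - l * D ω), abs_exp_sub_one_sub_id_le hlD]
  have hlin : P[fun ω => 1 + l ^ 2 * c ^ 2 + l * D ω|m] =ᵐ[P]
      fun ω => 1 + l ^ 2 * c ^ 2 + l * P[D|m] ω := by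
    filter_upwards [condExp_add (integrable_const (1 + l ^ 2 * c ^ 2)) (hD.smul l) m,
      condExp_smul l D m] with ω hadd hsmul
    change P[(fun _ => 1 + l ^ 2 * c ^ 2) + l • D|m] ω = _
    rw [hadd, Pi.add_apply, condExp_const hm, hsmul]
    rfl
  filter_upwards [condExp_mono (integrable_exp_mul_of_le hD.aestronglyMeasurable hl
    (hbdd.mono fun _ h => (le_abs_self _).trans h))
    ((integrable_const _).add (hD.const_mul l)) hquad, hlin] with ω hmono hω
  exact hmono.trans_eq hω

theorem integral_mul_le_of_condExp_le_one (hm : m ≤ mΩ) {f g : Ω → ℝ}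
    (hf : StronglyMeasurable[m] f) (hf0 : 0 ≤ f) {C : ℝ} (hfC : ∀ ω, f ω ≤ C)
    (hg : Integrable g P) (hcond : ∀ᵐ ω ∂P, f ω ≠ 0 → P[g|m] ω ≤ 1) :
    ∫ ω, f ω * g ω ∂P ≤ ∫ ω, f ω ∂P := by
  have hfC' : ∀ᵐ ω ∂P, ‖f ω‖ ≤ C :=
    .of_forall fun ω => (norm_of_nonneg (hf0 ω)).trans_le (hfC ω)
  have hfm := (hf.mono hm).aestronglyMeasurable (μ := P)
  calc ∫ ω, f ω * g ω ∂P = ∫ ω, P[f * g|m] ω ∂P := (integral_condExp hm).symm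
    _ = ∫ ω, f ω * P[g|m] ω ∂P :=
      integral_congr_ae (condExp_stronglyMeasurable_mul_of_bound hm hf hg C hfC')
    _ ≤ ∫ ω, f ω ∂P := by
      refine integral_mono_ae (integrable_condExp.bdd_mul hfm hfC') (.of_bound hfm C hfC') ?_
      filter_upwards [hcond] with ω hω
      by_cases hfω : f ω = 0
      · simp [hfω]
      · exact mul_le_of_le_one_right (hf0 ω) (hω hfω)

theorem setIntegral_exp_mul_le_of_condExp_le_sub (hm : m ≤ mΩ) {X Y : Ω → ℝ} {s : Set Ω}
    {ε c l : ℝ} (hs : MeasurableSet[m] s) (hXm : StronglyMeasurable[m] X) (hX : Integrable X P)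
    (hY : Integrable Y P) (hXs : ∀ ω ∈ s, X ω ≤ 0) (hbdd : ∀ᵐ ω ∂P, |Y ω - X ω| ≤ c)
    (hdrift : ∀ᵐ ω ∂P, ω ∈ s → P[Y|m] ω ≤ X ω - ε)
    (hl : 0 ≤ l) (hlc : l * c ≤ 1) (hlε : l * c ^ 2 ≤ ε) :
    ∫ ω in s, exp (l * Y ω) ∂P ≤ ∫ ω in s, exp (l * X ω) ∂P := by
  set f := s.indicator fun ω => exp (l * X ω)
  have hf : StronglyMeasurable[m] f :=
    (continuous_exp.comp_stronglyMeasurable (hXm.const_mul l)).indicator hs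
  have hf1 : ∀ ω, f ω ≤ 1 := Set.indicator_le' (fun ω hω =>
    exp_le_one_iff.2 (mul_nonpos_of_nonneg_of_nonpos hl (hXs ω hω))) fun _ _ => zero_le_one
  have hcond : ∀ᵐ ω ∂P, f ω ≠ 0 → P[fun ω => exp (l * (Y - X) ω)|m] ω ≤ 1 := by
    have hYX : P[Y - X|m] =ᵐ[P] P[Y|m] - X := by
      have h := condExp_sub hY hX m
      rwa [condExp_of_stronglyMeasurable hm hXm hX] at h
    filter_upwards [condExp_exp_mul_le hm (hY.sub hX) hl hlc hbdd, hYX, hdrift]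
      with ω hexp hω hdω hfω
    have hsq : l ^ 2 * c ^ 2 ≤ l * ε := by nlinarith [mul_le_mul_of_nonneg_left hlε hl]
    have hdrift_ω : l * P[Y - X|m] ω ≤ l * -ε := by
      rw [hω, Pi.sub_apply]
      exact mul_le_mul_of_nonneg_left (by linarith [hdω (Set.mem_of_indicator_ne_zero hfω)]) hl
    linarith
  calc ∫ ω in s, exp (l * Y ω) ∂P = ∫ ω, f ω * exp (l * (Y - X) ω) ∂P := by
        rw [← integral_indicator (hm s hs)]
        congr 1 with ω
        by_cases hω : ω ∈ s
        · simp only [f, Set.indicator_of_mem hω, Pi.sub_apply, ← exp_add]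
          ring_nf
        · simp [f, Set.indicator_of_notMem hω]
    _ ≤ ∫ ω, f ω ∂P := integral_mul_le_of_condExp_le_one hm hf
        (Set.indicator_nonneg fun _ _ => (exp_pos _).le) hf1
        (integrable_exp_mul_of_le (hY.sub hX).aestronglyMeasurable hl
          (hbdd.mono fun _ h => (le_abs_self _).trans h)) hcond
    _ = ∫ ω in s, exp (l * X ω) ∂P := integral_indicator (hm s hs)

end ExponentialMoment

theorem exists_pos_measure_le_neg {Ω : Type*} {mΩ : MeasurableSpace Ω} {μ : Measure Ω}
    {f : Ω → ℝ} {p : Ω → Prop} (h : 0 < μ {ω | f ω < 0 ∧ p ω}) :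
    ∃ δ > 0, 0 < μ {ω | f ω ≤ -δ ∧ p ω} := by
  have hU : {ω | f ω < 0 ∧ p ω} = ⋃ n : ℕ, {ω | f ω ≤ -(1 / (n + 1)) ∧ p ω} := by
    ext ω
    simp only [Set.mem_ofPred_eq, Set.mem_iUnion]
    constructor
    · rintro ⟨hf, hp⟩
      obtain ⟨n, hn⟩ := exists_nat_one_div_lt (neg_pos.2 hf)
      exact ⟨n, by linarith, hp⟩
    · rintro ⟨n, hf, hp⟩
      exact ⟨hf.trans_lt (neg_neg_of_pos Nat.one_div_pos_of_nat), hp⟩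
  obtain ⟨n, hn⟩ := exists_measure_pos_of_not_measure_iUnion_null (hU ▸ h.ne')
  exact ⟨1 / (n + 1), Nat.one_div_pos_of_nat, hn⟩

theorem measure_eq_top_pos_of_measureReal_inter_le {Ω : Type*} {mΩ : MeasurableSpace Ω}
    {μ : Measure Ω} [IsFiniteMeasure μ] {T : Ω → ℕ∞} {B : Set Ω} {r : ℝ} (hr : r < 1)
    (hB : 0 < μ B) (h : ∀ n : ℕ, μ.real (B ∩ {ω | T ω ≤ n}) ≤ r * μ.real B) :
    0 < μ {ω | T ω = ⊤} := by
  have hmono : Monotone fun n : ℕ => B ∩ {ω | T ω ≤ n} := fun a b hab =>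
    Set.inter_subset_inter_right _ fun ω (hω : T ω ≤ a) =>
      show T ω ≤ b from hω.trans (by exact_mod_cast hab)
  have hU : B ∩ {ω | T ω ≠ ⊤} = ⋃ n : ℕ, B ∩ {ω | T ω ≤ n} := by
    rw [← Set.inter_iUnion]
    congr 1 with ω
    simp only [Set.mem_ofPred_eq, Set.mem_iUnion]
    exact ⟨fun hω => ⟨(T ω).toNat, (ENat.natCast_toNat hω).ge⟩,
      fun ⟨n, hn⟩ => (hn.trans_lt (ENat.natCast_lt_top n)).ne⟩
  have hle : μ.real (B ∩ {ω | T ω ≠ ⊤}) ≤ r * μ.real B := by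
    rw [measureReal_def, hU, hmono.measure_iUnion]
    have hr0 : 0 ≤ r * μ.real B := measureReal_nonneg.trans (h 0)
    exact ENNReal.toReal_le_of_le_ofReal hr0
      (iSup_le fun n => (ENNReal.le_ofReal_iff_toReal_le (measure_ne_top _ _) hr0).2 (h n))
  by_contra hcon
  have hnull : μ {ω | T ω = ⊤} = 0 := nonpos_iff_eq_zero.1 (not_lt.1 hcon)
  have hfull : μ (B ∩ {ω | T ω ≠ ⊤}) = μ B :=
    measure_inter_conull' (measure_mono_null (fun ω (hω : ω ∈ B \ _) => not_not.1 hω.2) hnull)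
  rw [measureReal_def, hfull, ← measureReal_def] at hle
  have : 0 < μ.real B := ENNReal.toReal_pos hB.ne' (measure_ne_top _ _)
  nlinarith

section NegativeRun

variable {Ω : Type*} (M : ℕ → Ω → ℝ) (T : Ω → ℕ∞) (i₀ : ℕ)

def negRun (n : ℕ) : Set Ω := {ω | (n : ℕ∞) < T ω ∧ ∀ j ∈ Finset.Icc i₀ n, M j ω < 0}

/-- `negRunStopped M T i₀ k` is `M` at time `min (i₀ + k) τ`, where `τ` is the first time
`n ≥ i₀` at which the loop has stopped or `M n ≥ 0`. -/
noncomputable def negRunStopped : ℕ → Ω → ℝ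
  | 0 => M i₀
  | k + 1 => fun ω =>
      open Classical in
      if ω ∈ negRun M T i₀ (i₀ + k) then M (i₀ + k + 1) ω else negRunStopped k ω

variable {M T i₀}

theorem negRun_succ_subset (n : ℕ) : negRun M T i₀ (n + 1) ⊆ negRun M T i₀ n :=
  fun _ ⟨hT, hM⟩ => ⟨(ENat.natCast_lt_natCast.2 n.lt_succ_self).trans hT,
    fun j hj => hM j (Finset.Icc_subset_Icc_right n.le_succ hj)⟩

theorem negRunStopped_succ_of_mem {k : ℕ} {ω : Ω} (h : ω ∈ negRun M T i₀ (i₀ + k)) :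
    negRunStopped M T i₀ (k + 1) ω = M (i₀ + k + 1) ω :=
  if_pos h

theorem negRunStopped_succ_of_notMem {k : ℕ} {ω : Ω} (h : ω ∉ negRun M T i₀ (i₀ + k)) :
    negRunStopped M T i₀ (k + 1) ω = negRunStopped M T i₀ k ω :=
  if_neg h

theorem negRunStopped_of_mem {k : ℕ} {ω : Ω} (h : ω ∈ negRun M T i₀ (i₀ + k)) :
    negRunStopped M T i₀ k ω = M (i₀ + k) ω := by
  cases k with
  | zero => rfl
  | succ k => exact negRunStopped_succ_of_mem (negRun_succ_subset _ h)

theorem negRunStopped_lt {c : ℝ} {ω : Ω} (hbdd : ∀ n, i₀ ≤ n → |M (n + 1) ω - M n ω| < c)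
    (h₀ : M i₀ ω < c) (k : ℕ) : negRunStopped M T i₀ k ω < c := by
  induction k with
  | zero => exact h₀
  | succ k ih =>
    by_cases hω : ω ∈ negRun M T i₀ (i₀ + k)
    · have hneg := hω.2 (i₀ + k) (Finset.mem_Icc.2 ⟨by omega, le_rfl⟩)
      rw [negRunStopped_succ_of_mem hω]
      linarith [(abs_lt.1 (hbdd (i₀ + k) (by omega))).2]
    · rwa [negRunStopped_succ_of_notMem hω]

theorem negRunStopped_nonneg_of_notMem {ω : Ω} (hterm : ∀ n, i₀ ≤ n → T ω = n → 0 ≤ M n ω)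
    (hT : (i₀ : ℕ∞) < T ω) {k : ℕ} (h : ω ∉ negRun M T i₀ (i₀ + k)) :
    0 ≤ negRunStopped M T i₀ k ω := by
  induction k with
  | zero =>
    simp only [negRun, add_zero, Finset.Icc_self, Finset.mem_singleton, forall_eq,
      Set.mem_ofPred_eq, hT, true_and, not_lt] at h
    exact h
  | succ k ih =>
    by_cases hω : ω ∈ negRun M T i₀ (i₀ + k)
    · rw [negRunStopped_succ_of_mem hω]
      simp only [negRun, Set.mem_ofPred_eq, not_and_or, not_lt, not_forall] at h
      rcases h with hTle | ⟨j, hj, hMj⟩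
      · have hTeq : T ω = ((i₀ + k + 1 : ℕ) : ℕ∞) :=
          le_antisymm hTle (by simpa using Order.add_one_le_of_lt hω.1)
        exact hterm _ (by omega) hTeq
      · rcases (Finset.mem_Icc.1 hj).2.lt_or_eq with hlt | rfl
        · exact absurd hMj
            (not_le.2 (hω.2 j (Finset.mem_Icc.2 ⟨(Finset.mem_Icc.1 hj).1, by omega⟩)))
        · exact hMj
    · rw [negRunStopped_succ_of_notMem hω]
      exact ih hω

variable {mΩ : MeasurableSpace Ω} {ℱ : Filtration ℕ mΩ}

theorem measurableSet_lt_of_isStoppingTime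
    (hT : ∀ n : ℕ, MeasurableSet[ℱ n] {ω | T ω ≤ n}) (n : ℕ) :
    MeasurableSet[ℱ n] {ω | (n : ℕ∞) < T ω} := by
  simpa only [Set.compl_ofPred, not_le] using (hT n).compl

theorem measurableSet_negRun (hM : Adapted ℱ M) (hT : ∀ n : ℕ, MeasurableSet[ℱ n] {ω | T ω ≤ n})
    (n : ℕ) : MeasurableSet[ℱ n] (negRun M T i₀ n) := by
  have hset : negRun M T i₀ n =
      {ω | (n : ℕ∞) < T ω} ∩ ⋂ j ∈ Finset.Icc i₀ n, {ω | M j ω < 0} := by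
    ext; simp [negRun]
  rw [hset]
  exact (measurableSet_lt_of_isStoppingTime hT n).inter <|
    Finset.measurableSet_biInter _ fun j hj =>
      measurableSet_lt ((hM j).mono (ℱ.mono (Finset.mem_Icc.1 hj).2) le_rfl) measurable_const

theorem measurable_negRunStopped (hM : Adapted ℱ M)
    (hT : ∀ n : ℕ, MeasurableSet[ℱ n] {ω | T ω ≤ n}) (k : ℕ) :
    Measurable (negRunStopped M T i₀ k) := by
  induction k with
  | zero => exact (hM i₀).mono (ℱ.le i₀) le_rfl
  | succ k ih =>
    exact Measurable.ite (ℱ.le _ _ (measurableSet_negRun hM hT _))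
      ((hM _).mono (ℱ.le _) le_rfl) ih

end NegativeRun

section RepulsingProcess

variable {Ω : Type*} {mΩ : MeasurableSpace Ω} {P : Measure Ω} [IsFiniteMeasure P]
  {ℱ : Filtration ℕ mΩ} {M : ℕ → Ω → ℝ} {T : Ω → ℕ∞} {i₀ : ℕ} {c l : ℝ} {B : Set Ω}

theorem integrableOn_exp_negRunStopped (hM : Adapted ℱ M)
    (hT : ∀ n : ℕ, MeasurableSet[ℱ n] {ω | T ω ≤ n})
    (hbdd : ∀ᵐ ω ∂P, ∀ n, i₀ ≤ n → |M (n + 1) ω - M n ω| < c) (hB : MeasurableSet B)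
    (hBc : ∀ ω ∈ B, M i₀ ω < c) (hl : 0 ≤ l) (k : ℕ) :
    IntegrableOn (fun ω => exp (l * negRunStopped M T i₀ k ω)) B P := by
  refine integrable_exp_mul_of_le (c := c) (measurable_negRunStopped hM hT k).aestronglyMeasurable
    hl ?_
  rw [ae_restrict_iff' hB]
  filter_upwards [hbdd] with ω hω hωB
  exact (negRunStopped_lt hω (hBc ω hωB) k).le

theorem setIntegral_exp_negRunStopped_succ_le {ε : ℝ} (hM : Adapted ℱ M)
    (hInt : ∀ n, Integrable (M n) P) (hT : ∀ n : ℕ, MeasurableSet[ℱ n] {ω | T ω ≤ n})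
    (hdrift : ∀ n : ℕ, i₀ ≤ n → ∀ᵐ ω ∂P, (n : ℕ∞) < T ω → P[M (n + 1)|ℱ n] ω ≤ M n ω - ε)
    (hbdd : ∀ n : ℕ, i₀ ≤ n → ∀ᵐ ω ∂P, |M (n + 1) ω - M n ω| < c)
    (hB : MeasurableSet[ℱ i₀] B) (hBc : ∀ ω ∈ B, M i₀ ω < c)
    (hl : 0 ≤ l) (hlc : l * c ≤ 1) (hlε : l * c ^ 2 ≤ ε) (k : ℕ) :
    ∫ ω in B, exp (l * negRunStopped M T i₀ (k + 1) ω) ∂P ≤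
      ∫ ω in B, exp (l * negRunStopped M T i₀ k ω) ∂P := by
  set n := i₀ + k
  set G := negRun M T i₀ n
  have hG : MeasurableSet[ℱ n] G := measurableSet_negRun hM hT n
  have hs : MeasurableSet[ℱ n] (B ∩ G) := (ℱ.mono (Nat.le_add_right i₀ k) _ hB).inter hG
  have hbdd' := ae_all_iff.2 fun n => eventually_imp_distrib_left.2 (hbdd n)
  have hstep := setIntegral_exp_mul_le_of_condExp_le_sub (ℱ.le n) hs
    (hM n).stronglyMeasurable (hInt n) (hInt (n + 1))
    (fun ω hω => (hω.2.2 n (Finset.mem_Icc.2 ⟨Nat.le_add_right i₀ k, le_rfl⟩)).le)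
    ((hbdd n (Nat.le_add_right i₀ k)).mono fun _ h => h.le)
    ((hdrift n (Nat.le_add_right i₀ k)).mono fun _ h hω => h hω.2.1) hl hlc hlε
  have hsucc : ∫ ω in B ∩ G, exp (l * negRunStopped M T i₀ (k + 1) ω) ∂P =
      ∫ ω in B ∩ G, exp (l * M (n + 1) ω) ∂P :=
    setIntegral_congr_fun (ℱ.le n _ hs) fun ω hω => by
      rw [negRunStopped_succ_of_mem hω.2]
  have hcurr : ∫ ω in B ∩ G, exp (l * negRunStopped M T i₀ k ω) ∂P =
      ∫ ω in B ∩ G, exp (l * M n ω) ∂P :=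
    setIntegral_congr_fun (ℱ.le n _ hs) fun ω hω => by
      rw [negRunStopped_of_mem hω.2]
  have hstopped : ∫ ω in B \ G, exp (l * negRunStopped M T i₀ (k + 1) ω) ∂P =
      ∫ ω in B \ G, exp (l * negRunStopped M T i₀ k ω) ∂P :=
    setIntegral_congr_fun ((ℱ.le i₀ _ hB).diff (ℱ.le n _ hG)) fun ω hω => by
      rw [negRunStopped_succ_of_notMem hω.2]
  rw [← integral_inter_add_sdiff (ℱ.le n _ hG)
      (integrableOn_exp_negRunStopped hM hT hbdd' (ℱ.le i₀ _ hB) hBc hl (k + 1)),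
    ← integral_inter_add_sdiff (ℱ.le n _ hG)
      (integrableOn_exp_negRunStopped hM hT hbdd' (ℱ.le i₀ _ hB) hBc hl k),
    hsucc, hcurr, hstopped]
  exact add_le_add_left hstep _

theorem setIntegral_exp_negRunStopped_zero_le {δ : ℝ} (hM : Adapted ℱ M)
    (hT : ∀ n : ℕ, MeasurableSet[ℱ n] {ω | T ω ≤ n})
    (hbdd : ∀ᵐ ω ∂P, ∀ n, i₀ ≤ n → |M (n + 1) ω - M n ω| < c) (hB : MeasurableSet B)
    (hBc : ∀ ω ∈ B, M i₀ ω < c) (hl : 0 ≤ l) (hBδ : ∀ ω ∈ B, M i₀ ω ≤ -δ) :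
    ∫ ω in B, exp (l * negRunStopped M T i₀ 0 ω) ∂P ≤ exp (-(l * δ)) * P.real B := by
  calc ∫ ω in B, exp (l * negRunStopped M T i₀ 0 ω) ∂P ≤ ∫ _ in B, exp (-(l * δ)) ∂P :=
        setIntegral_mono_on (integrableOn_exp_negRunStopped hM hT hbdd hB hBc hl 0)
          integrableOn_const hB fun ω hω =>
            exp_le_exp.2 ((mul_le_mul_of_nonneg_left (hBδ ω hω) hl).trans_eq (mul_neg _ _))
    _ = exp (-(l * δ)) * P.real B := by rw [setIntegral_const, smul_eq_mul, mul_comm]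

theorem measureReal_inter_le_setIntegral_exp_negRunStopped (hM : Adapted ℱ M)
    (hT : ∀ n : ℕ, MeasurableSet[ℱ n] {ω | T ω ≤ n})
    (hterm : ∀ᵐ ω ∂P, ∀ n, i₀ ≤ n → T ω = n → 0 ≤ M n ω)
    (hbdd : ∀ᵐ ω ∂P, ∀ n, i₀ ≤ n → |M (n + 1) ω - M n ω| < c) (hB : MeasurableSet B)
    (hBc : ∀ ω ∈ B, M i₀ ω < c) (hBT : ∀ ω ∈ B, (i₀ : ℕ∞) < T ω) (hl : 0 ≤ l) (k : ℕ) :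
    P.real (B ∩ {ω | T ω ≤ (i₀ + k : ℕ)}) ≤
      ∫ ω in B, exp (l * negRunStopped M T i₀ k ω) ∂P := by
  have hS : MeasurableSet (B ∩ {ω | T ω ≤ (i₀ + k : ℕ)}) := hB.inter (ℱ.le _ _ (hT _))
  have hint := integrableOn_exp_negRunStopped hM hT hbdd hB hBc hl k
  calc P.real (B ∩ {ω | T ω ≤ (i₀ + k : ℕ)})
      = ∫ _ in B ∩ {ω | T ω ≤ (i₀ + k : ℕ)}, (1 : ℝ) ∂P := by
        rw [setIntegral_const, smul_eq_mul, mul_one]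
    _ ≤ ∫ ω in B ∩ {ω | T ω ≤ (i₀ + k : ℕ)}, exp (l * negRunStopped M T i₀ k ω) ∂P := by
        refine setIntegral_mono_on_ae integrableOn_const (hint.mono_set Set.inter_subset_left) hS ?_
        filter_upwards [hterm] with ω hω hωS
        exact one_le_exp (mul_nonneg hl (negRunStopped_nonneg_of_notMem hω (hBT ω hωS.1)
          fun hrun => not_lt.2 hωS.2 hrun.1))
    _ ≤ ∫ ω in B, exp (l * negRunStopped M T i₀ k ω) ∂P :=
        setIntegral_mono_set hint (.of_forall fun _ => (exp_pos _).le)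
          Set.inter_subset_left.eventuallyLE

end RepulsingProcess

/-- **Relaxed Repulsing-AST Rule.** If `(M n)` is an adapted integrable process, `T` a
stopping time, and there are constants `ε > 0`, `c > 0` and an index `i₀ ∈ ℕ` such that
`P({M i₀ < 0} ∩ {T > i₀}) > 0`, and for every `n ≥ i₀`: `M n ≥ 0` a.e. on `{T = n}`, the
conditional expectation decreases by at least `ε` on `{T > n}`, and the differences are
bounded by `c` a.s., then `P(T = ∞) > 0` (termination is not almost sure). -/
theorem relaxed_repulsing_ast_rule
    {Ω : Type*} {mΩ : MeasurableSpace Ω} {P : Measure Ω} [IsProbabilityMeasure P]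
    (ℱ : Filtration ℕ mΩ) (M : ℕ → Ω → ℝ) (T : Ω → ℕ∞)
    (hAdapted : Adapted ℱ M) (hInt : ∀ n, Integrable (M n) P)
    (hStop : ∀ n : ℕ, MeasurableSet[ℱ n] {ω | T ω ≤ (n : ℕ∞)})
    (ε c : ℝ) (hε : 0 < ε) (hc : 0 < c) (i₀ : ℕ)
    (hNeg : 0 < P {ω | M i₀ ω < 0 ∧ (i₀ : ℕ∞) < T ω})
    (hTerm : ∀ n : ℕ, i₀ ≤ n → ∀ᵐ ω ∂P, T ω = (n : ℕ∞) → 0 ≤ M n ω)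
    (hDrift : ∀ n : ℕ, i₀ ≤ n → ∀ᵐ ω ∂P, (n : ℕ∞) < T ω →
      (P[M (n + 1)|ℱ n]) ω ≤ M n ω - ε)
    (hBdd : ∀ n : ℕ, i₀ ≤ n → ∀ᵐ ω ∂P, |M (n + 1) ω - M n ω| < c) :
    0 < P {ω | T ω = ⊤} := by
  obtain ⟨δ, hδ, hPB⟩ := exists_pos_measure_le_neg hNeg
  set B := {ω | M i₀ ω ≤ -δ ∧ (i₀ : ℕ∞) < T ω}
  have hBF : MeasurableSet[ℱ i₀] B := (measurableSet_le (hAdapted i₀) measurable_const).inter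
    (measurableSet_lt_of_isStoppingTime hStop i₀)
  have hB : MeasurableSet B := ℱ.le i₀ _ hBF
  have hBc : ∀ ω ∈ B, M i₀ ω < c := fun ω hω => by linarith [hω.1]
  obtain ⟨l, hl, hlc, hlε⟩ : ∃ l : ℝ, 0 < l ∧ l * c ≤ 1 ∧ l * c ^ 2 ≤ ε :=
    ⟨min (1 / c) (ε / c ^ 2), by positivity,
      (mul_le_mul_of_nonneg_right (min_le_left _ _) hc.le).trans_eq (by field_simp),
      (mul_le_mul_of_nonneg_right (min_le_right _ _) (by positivity)).trans_eq (by field_simp)⟩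
  have hbdd := ae_all_iff.2 fun n => eventually_imp_distrib_left.2 (hBdd n)
  have hterm := ae_all_iff.2 fun n => eventually_imp_distrib_left.2 (hTerm n)
  have hdecr : Antitone fun k => ∫ ω in B, exp (l * negRunStopped M T i₀ k ω) ∂P :=
    antitone_nat_of_succ_le (setIntegral_exp_negRunStopped_succ_le hAdapted hInt hStop hDrift
      hBdd hBF hBc hl.le hlc hlε)
  refine measure_eq_top_pos_of_measureReal_inter_le
    (exp_lt_one_iff.2 (neg_neg_of_pos (mul_pos hl hδ))) hPB fun n => ?_
  calc P.real (B ∩ {ω | T ω ≤ n}) ≤ P.real (B ∩ {ω | T ω ≤ (i₀ + n : ℕ)}) :=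
        measureReal_mono (Set.inter_subset_inter_right _ fun ω (hω : T ω ≤ n) =>
          show T ω ≤ (i₀ + n : ℕ) from hω.trans (by exact_mod_cast Nat.le_add_left n i₀))
    _ ≤ ∫ ω in B, exp (l * negRunStopped M T i₀ n ω) ∂P :=
        measureReal_inter_le_setIntegral_exp_negRunStopped hAdapted hStop hterm hbdd hB hBc
          (fun ω hω => hω.2) hl.le n
    _ ≤ exp (-(l * δ)) * P.real B := (hdecr (Nat.zero_le n)).trans
        (setIntegral_exp_negRunStopped_zero_le hAdapted hStop hbdd hB hBc hl.le fun ω hω => hω.1)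
end

section
/- Relaxed Repulsing-PAST Rule (Theorem 6, second part): Let (M_n)_{n∈ℕ} be an adapted, integrable real-valued process on a filtered probability space and T a stopping time. Suppose there are a constant c > 0 and an index i₀ ∈ ℕ such that: (i) P({M_{i₀} < 0} ∩ {T > i₀}) > 0; (ii) for every n ≥ i₀, M_n ≥ 0 P-almost everywhere on the event {T = n}; (iii) for every n ≥ i₀, E(M_{n+1} | ℱ_n) ≤ M_n P-almost everywhere on {T > n}; and (iv) for every n ≥ i₀, |M_{n+1} − M_n| < c P-almost surely. Then E(T) = ∞, i.e. termination is not positive almost sure. -/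
open MeasureTheory Filter
open scoped ENNReal Topology

/-! If `E T < ∞`, then `T` is a.s. finite. Because the increments are bounded, the stopped process
`M (n ∧ T)` is dominated by `∑ j ≤ i₀, |M j| + c T`, which is integrable. On the `ℱ i₀`-event
`A = {M i₀ < 0, i₀ < T}` the supermartingale property gives `∫_A M (n ∧ T) ≤ ∫_A M i₀`, and
dominated convergence turns this into `∫_A M T ≤ ∫_A M i₀ < 0`. This contradicts `M T ≥ 0` on
`A`. -/

theorem abs_le_sum_range_abs_add_mul {a : ℕ → ℝ} {c : ℝ} {i : ℕ} (hc : 0 ≤ c)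
    (ha : ∀ j, i ≤ j → |a (j + 1) - a j| ≤ c) (m : ℕ) :
    |a m| ≤ ∑ j ∈ Finset.range (i + 1), |a j| + c * m := by
  have head : ∀ j ≤ i, |a j| ≤ ∑ j ∈ Finset.range (i + 1), |a j| := fun j hj =>
    Finset.single_le_sum (f := fun j => |a j|) (fun _ _ => abs_nonneg _)
      (Finset.mem_range.2 (Nat.lt_succ_of_le hj))
  induction m with
  | zero => simpa using head 0 (Nat.zero_le i)
  | succ m ih =>
    by_cases hm : i ≤ m
    · calc |a (m + 1)| ≤ |a m| + |a (m + 1) - a m| := by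
            simpa using abs_add_le (a m) (a (m + 1) - a m)
        _ ≤ ∑ j ∈ Finset.range (i + 1), |a j| + c * m + c := add_le_add ih (ha m hm)
        _ = ∑ j ∈ Finset.range (i + 1), |a j| + c * ↑(m + 1) := by push_cast; ring
    · exact (head (m + 1) (by omega)).trans (le_add_of_nonneg_right (by positivity))

namespace MeasureTheory

variable {Ω : Type*} {mΩ : MeasurableSpace Ω} {μ : Measure Ω}

theorem setIntegral_neg_of_forall_mem {f : Ω → ℝ} {s : Set Ω} (hs : MeasurableSet s)
    (hμs : 0 < μ s) (hf : IntegrableOn f s μ) (hneg : ∀ ω ∈ s, f ω < 0) :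
    ∫ ω in s, f ω ∂μ < 0 := by
  have hpos : ∀ ω ∈ s, 0 < -f ω := fun ω hω => neg_pos.2 (hneg ω hω)
  have : 0 < ∫ ω in s, -f ω ∂μ := by
    rw [setIntegral_pos_iff_support_of_nonneg_ae
      (ae_restrict_of_forall_mem hs fun ω hω => (hpos ω hω).le) hf.neg]
    exact hμs.trans_le (measure_mono fun ω hω => ⟨(hpos ω hω).ne', hω⟩)
  rwa [integral_neg, neg_pos] at this

theorem setIntegral_le_of_condExp_le {m : MeasurableSpace Ω} (hm : m ≤ mΩ)
    [SigmaFinite (μ.trim hm)] {f g : Ω → ℝ} {s : Set Ω} (hf : Integrable f μ)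
    (hg : Integrable g μ) (hs : MeasurableSet[m] s)
    (hfg : ∀ᵐ ω ∂μ, ω ∈ s → μ[f|m] ω ≤ g ω) :
    ∫ ω in s, f ω ∂μ ≤ ∫ ω in s, g ω ∂μ := by
  rw [← setIntegral_condExp hm hf hs]
  exact setIntegral_mono_ae_restrict integrable_condExp.integrableOn hg.integrableOn
    ((ae_restrict_iff' (hm s hs)).2 hfg)

section StoppedProcess

variable {β : Type*} {u : ℕ → Ω → β} {T : Ω → ℕ∞} {ℱ : Filtration ℕ mΩ}

-- `hT.measurable'` is measurability for the Borel σ-algebra of `WithTop ℕ`, not the one of `ℕ∞`.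
theorem IsStoppingTime.measurable_enat (hT : IsStoppingTime ℱ T) : Measurable T := by
  refine measurable_to_countable' fun x => ?_
  induction x using ENat.recTopCoe with
  | top => exact hT.measurableSet_eq_top
  | coe k => exact ℱ.le k _ (hT.measurableSet_eq k)

theorem IsStoppingTime.ae_ne_top (hT : IsStoppingTime ℱ T)
    (hT_int : ∫⁻ ω, (T ω : ℝ≥0∞) ∂μ ≠ ∞) : ∀ᵐ ω ∂μ, T ω ≠ ⊤ := by
  filter_upwards [ae_lt_top ((measurable_of_countable _).comp hT.measurable_enat) hT_int]
    with ω hω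
  exact fun h => by simp [h] at hω

theorem IsStoppingTime.integrable_toNat (hT : IsStoppingTime ℱ T)
    (hT_int : ∫⁻ ω, (T ω : ℝ≥0∞) ∂μ ≠ ∞) : Integrable (fun ω => ((T ω).toNat : ℝ)) μ := by
  have h := integrable_toReal_of_lintegral_ne_top
    ((measurable_of_countable (fun t : ℕ∞ => (t : ℝ≥0∞))).comp hT.measurable_enat).aemeasurable
    hT_int
  have h_toReal (t : ℕ∞) : (t : ℝ≥0∞).toReal = t.toNat := by
    induction t using ENat.recTopCoe <;> simp
  exact h.congr (Eventually.of_forall fun ω => h_toReal (T ω))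

theorem stoppedValue_apply_of_eq_coe {ω : Ω} {k : ℕ} (hT : T ω = k) :
    stoppedValue u T ω = u k ω := by
  simp [stoppedValue, hT]

theorem stoppedProcess_apply_of_eq_coe {ω : Ω} {k : ℕ} (hT : T ω = k) (n : ℕ) :
    stoppedProcess u T n ω = u (min n k) ω := by
  rcases le_total n k with h | h
  · rw [min_eq_left h]
    exact stoppedProcess_eq_of_le (hT ▸ WithTop.coe_le_coe.2 h)
  · rw [min_eq_right h]
    exact (stoppedProcess_eq_of_ge (hT ▸ WithTop.coe_le_coe.2 h)).trans
      (stoppedValue_apply_of_eq_coe hT)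

theorem stoppedProcess_succ_sub [AddGroup β] (n : ℕ) :
    stoppedProcess u T (n + 1) - stoppedProcess u T n
      = {ω | (n : ℕ∞) < T ω}.indicator (u (n + 1) - u n) := by
  ext ω
  by_cases h : (n : ℕ∞) < T ω
  · simp only [Set.indicator_of_mem (show ω ∈ {ω | (n : ℕ∞) < T ω} from h), Pi.sub_apply]
    rw [stoppedProcess_eq_of_le (Order.add_one_le_of_lt h), stoppedProcess_eq_of_le h.le]
  · simp only [Set.indicator_of_notMem (show ω ∉ {ω | (n : ℕ∞) < T ω} from h), Pi.sub_apply]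
    rw [not_lt] at h
    rw [stoppedProcess_eq_of_ge h,
      stoppedProcess_eq_of_ge (h.trans (WithTop.coe_le_coe.2 n.le_succ)), sub_self]

variable {M : ℕ → Ω → ℝ}

theorem setIntegral_stoppedProcess_succ_le [SigmaFiniteFiltration μ ℱ]
    (hT : IsStoppingTime ℱ T) (hM : ∀ n, Integrable (M n) μ) {n : ℕ} {s : Set Ω}
    (hs : MeasurableSet[ℱ n] s)
    (hsuper : ∀ᵐ ω ∂μ, (n : ℕ∞) < T ω → μ[M (n + 1)|ℱ n] ω ≤ M n ω) :
    ∫ ω in s, stoppedProcess M T (n + 1) ω ∂μ ≤ ∫ ω in s, stoppedProcess M T n ω ∂μ := by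
  have hsT : MeasurableSet[ℱ n] (s ∩ {ω | (n : ℕ∞) < T ω}) :=
    hs.inter (hT.measurableSet_gt n)
  have hstep := setIntegral_le_of_condExp_le (ℱ.le n) (hM (n + 1)) (hM n) hsT
    (by filter_upwards [hsuper] with ω h hω using h hω.2)
  have hdiff : ∫ ω in s, (stoppedProcess M T (n + 1) ω - stoppedProcess M T n ω) ∂μ
      = ∫ ω in s ∩ {ω | (n : ℕ∞) < T ω}, (M (n + 1) ω - M n ω) ∂μ :=
    (integral_congr_ae (Eventually.of_forall fun ω => congrFun (stoppedProcess_succ_sub n) ω)).trans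
      (setIntegral_indicator (ℱ.le n _ (hT.measurableSet_gt n)))
  rw [integral_sub (integrable_stoppedProcess hT hM _).integrableOn
    (integrable_stoppedProcess hT hM _).integrableOn, integral_sub (hM _).integrableOn
    (hM _).integrableOn] at hdiff
  linarith

theorem setIntegral_stoppedProcess_le [SigmaFiniteFiltration μ ℱ] (hT : IsStoppingTime ℱ T)
    (hM : ∀ n, Integrable (M n) μ) {i n : ℕ} (hin : i ≤ n) {s : Set Ω}
    (hs : MeasurableSet[ℱ i] s)
    (hsuper : ∀ k, i ≤ k → ∀ᵐ ω ∂μ, (k : ℕ∞) < T ω → μ[M (k + 1)|ℱ k] ω ≤ M k ω) :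
    ∫ ω in s, stoppedProcess M T n ω ∂μ ≤ ∫ ω in s, stoppedProcess M T i ω ∂μ := by
  induction n, hin using Nat.le_induction with
  | base => exact le_rfl
  | succ n hin ih =>
    exact (setIntegral_stoppedProcess_succ_le hT hM (ℱ.mono hin s hs) (hsuper n hin)).trans ih

theorem tendsto_integral_stoppedProcess (hT : IsStoppingTime ℱ T)
    (hT_int : ∫⁻ ω, (T ω : ℝ≥0∞) ∂μ ≠ ∞) (hM : ∀ n, Integrable (M n) μ) {c : ℝ} (hc : 0 ≤ c)
    {i : ℕ} (hbdd : ∀ j, i ≤ j → ∀ᵐ ω ∂μ, |M (j + 1) ω - M j ω| ≤ c) :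
    Tendsto (fun n => ∫ ω, stoppedProcess M T n ω ∂μ) atTop
      (𝓝 (∫ ω, stoppedValue M T ω ∂μ)) := by
  have hbdd' : ∀ᵐ ω ∂μ, ∀ j ∈ Set.Ici i, |M (j + 1) ω - M j ω| ≤ c :=
    (ae_ball_iff (Set.to_countable _)).2 hbdd
  refine tendsto_integral_of_dominated_convergence
    (fun ω => ∑ j ∈ Finset.range (i + 1), |M j ω| + c * (T ω).toNat)
    (fun n => (integrable_stoppedProcess hT hM n).aestronglyMeasurable)
    ((integrable_finsetSum _ fun j _ => (hM j).abs).add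
      ((hT.integrable_toNat hT_int).const_mul c))
    (fun n => ?_) ?_
  · filter_upwards [hT.ae_ne_top hT_int, hbdd'] with ω hω hωbdd
    obtain ⟨k, hk⟩ := ENat.ne_top_iff_exists.1 hω
    rw [Real.norm_eq_abs, stoppedProcess_apply_of_eq_coe hk.symm, ← hk, ENat.toNat_natCast]
    refine (abs_le_sum_range_abs_add_mul (a := fun j => M j ω) hc hωbdd _).trans ?_
    gcongr
    exact min_le_right n k
  · filter_upwards [hT.ae_ne_top hT_int] with ω hω
    obtain ⟨k, hk⟩ := ENat.ne_top_iff_exists.1 hω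
    exact tendsto_atTop_of_eventually_const (i₀ := k) fun n hn =>
      stoppedProcess_eq_of_ge (hk ▸ WithTop.coe_le_coe.2 hn)

end StoppedProcess

end MeasureTheory

/-- **Relaxed Repulsing-PAST Rule.** If `(M n)` is an adapted integrable process, `T` a
stopping time, and there are a constant `c > 0` and an index `i₀ ∈ ℕ` such that
`P({M i₀ < 0} ∩ {T > i₀}) > 0`, and for every `n ≥ i₀`: `M n ≥ 0` a.e. on `{T = n}`,
`(M n)` is a supermartingale on `{T > n}`, and the differences are bounded by `c` a.s.,
then `E(T) = ∞` (termination is not positive almost sure). -/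
theorem relaxed_repulsing_past_rule
    {Ω : Type*} {mΩ : MeasurableSpace Ω} {P : Measure Ω} [IsProbabilityMeasure P]
    (ℱ : Filtration ℕ mΩ) (M : ℕ → Ω → ℝ) (T : Ω → ℕ∞)
    (hAdapted : Adapted ℱ M) (hInt : ∀ n, Integrable (M n) P)
    (hStop : ∀ n : ℕ, MeasurableSet[ℱ n] {ω | T ω ≤ (n : ℕ∞)})
    (c : ℝ) (hc : 0 < c) (i₀ : ℕ)
    (hNeg : 0 < P {ω | M i₀ ω < 0 ∧ (i₀ : ℕ∞) < T ω})
    (hTerm : ∀ n : ℕ, i₀ ≤ n → ∀ᵐ ω ∂P, T ω = (n : ℕ∞) → 0 ≤ M n ω)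
    (hSM : ∀ n : ℕ, i₀ ≤ n → ∀ᵐ ω ∂P, (n : ℕ∞) < T ω →
      (P[M (n + 1)|ℱ n]) ω ≤ M n ω)
    (hBdd : ∀ n : ℕ, i₀ ≤ n → ∀ᵐ ω ∂P, |M (n + 1) ω - M n ω| < c) :
    (∫⁻ ω, (T ω : ℝ≥0∞) ∂P) = ⊤ := by
  by_contra hT_int
  have hT : IsStoppingTime ℱ T := hStop
  set A := {ω | M i₀ ω < 0 ∧ (i₀ : ℕ∞) < T ω}
  have hA : MeasurableSet[ℱ i₀] A :=
    (hAdapted i₀ measurableSet_Iio).inter (hT.measurableSet_gt i₀)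
  have hA' : MeasurableSet A := ℱ.le i₀ A hA
  have hlim := tendsto_integral_stoppedProcess (μ := P.restrict A) hT
    (ne_top_of_le_ne_top hT_int (setLIntegral_le_lintegral _ _)) (fun n => (hInt n).restrict)
    hc.le fun j hj => ae_restrict_of_ae ((hBdd j hj).mono fun ω h => h.le)
  have h_upper : ∫ ω in A, stoppedValue M T ω ∂P ≤ ∫ ω in A, M i₀ ω ∂P := by
    refine le_of_tendsto hlim (eventually_atTop.2 ⟨i₀, fun n hn => ?_⟩)
    refine (setIntegral_stoppedProcess_le hT hInt hn hA hSM).trans_eq ?_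
    exact setIntegral_congr_fun hA' fun ω hω => stoppedProcess_eq_of_le hω.2.le
  have h_lower : 0 ≤ ∫ ω in A, stoppedValue M T ω ∂P := by
    refine setIntegral_nonneg_ae hA' ?_
    filter_upwards [hT.ae_ne_top hT_int, (ae_ball_iff (Set.to_countable (Set.Ici i₀))).2 hTerm]
      with ω hω hωTerm hωA
    obtain ⟨k, hk⟩ := ENat.ne_top_iff_exists.1 hω
    rw [stoppedValue_apply_of_eq_coe hk.symm]
    exact hωTerm k (by exact_mod_cast hk ▸ hωA.2.le) hk.symm
  have h_neg := setIntegral_neg_of_forall_mem hA' hNeg (hInt i₀).integrableOn fun ω hω => hω.1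
  linarith
end

section
/- Eventual sign-definiteness of exponential polynomials: Let f : ℕ → ℝ be an exponential polynomial, i.e. f(i) = Σ_{j=1}^{k} p_j(i)·c_j^i for some k ∈ ℕ, real polynomials p_1,…,p_k and nonnegative real bases c_1,…,c_k ≥ 0. Then f is eventually sign-definite: either there exists i₀ ∈ ℕ such that f(i) ≥ 0 for all i ≥ i₀, or there exists i₀ ∈ ℕ such that f(i) ≤ 0 for all i ≥ i₀. -/
open Filter Finset Topology

/-- A polynomial times a geometric factor with ratio in `[0,1)` tends to zero. -/
lemma exp_poly_aux_tendsto_poly_mul_pow (P : Polynomial ℝ) {r : ℝ} (h0 : 0 ≤ r) (h1 : r < 1) :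
    Tendsto (fun i : ℕ => P.eval (i : ℝ) * r ^ i) atTop (𝓝 0) := by
  have h : Tendsto (fun i : ℕ => ∑ k ∈ Finset.range (P.natDegree + 1),
      P.coeff k * ((i : ℝ) ^ k * r ^ i)) atTop (𝓝 (∑ k ∈ Finset.range (P.natDegree + 1), (0:ℝ))) := by
    apply tendsto_finset_sum
    intro k _
    simpa using tendsto_const_nhds.mul (tendsto_pow_const_mul_const_pow_of_lt_one k h0 h1)
  simp only [Finset.sum_const_zero] at h
  apply h.congr
  intro i
  rw [Polynomial.eval_eq_sum_range, Finset.sum_mul]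
  apply Finset.sum_congr rfl
  intro k _
  ring

/-- `P.eval i / i ^ natDegree → leadingCoeff`. -/
lemma exp_poly_aux_tendsto_eval_div_pow (P : Polynomial ℝ) :
    Tendsto (fun i : ℕ => P.eval (i : ℝ) / (i : ℝ) ^ P.natDegree) atTop (𝓝 P.leadingCoeff) := by
  set d := P.natDegree with hd
  have hinv : Tendsto (fun i : ℕ => ((i : ℝ))⁻¹) atTop (𝓝 0) :=
    tendsto_inv_atTop_zero.comp tendsto_natCast_atTop_atTop
  have h : Tendsto (fun i : ℕ => ∑ k ∈ Finset.range (d + 1),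
      P.coeff k * (((i : ℝ))⁻¹) ^ (d - k)) atTop
      (𝓝 (∑ k ∈ Finset.range (d + 1), P.coeff k * (0:ℝ) ^ (d - k))) := by
    apply tendsto_finset_sum
    intro k _
    exact tendsto_const_nhds.mul (hinv.pow (d - k))
  have hsum : (∑ k ∈ Finset.range (d + 1), P.coeff k * (0:ℝ) ^ (d - k)) = P.leadingCoeff := by
    rw [Finset.sum_eq_single_of_mem d (Finset.self_mem_range_succ d)]
    · rw [Nat.sub_self, pow_zero, mul_one, hd, Polynomial.leadingCoeff]
    · intro k hk hkd
      have hklt : k < d := lt_of_le_of_ne (Nat.lt_succ_iff.mp (Finset.mem_range.mp hk)) hkd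
      rw [zero_pow (Nat.sub_ne_zero_of_lt hklt), mul_zero]
  rw [hsum] at h
  apply h.congr'
  filter_upwards [eventually_ge_atTop 1] with i hi
  have hi0 : (i : ℝ) ≠ 0 := by positivity
  rw [Polynomial.eval_eq_sum_range, Finset.sum_div]
  apply Finset.sum_congr rfl
  intro k hk
  have hkd : k ≤ d := Nat.lt_succ_iff.mp (Finset.mem_range.mp hk)
  rw [inv_pow_sub₀ hi0 hkd]
  ring

/-- Sign-definiteness for a sum over a finset of distinct nonnegative bases. -/
lemma exp_poly_aux_main (s : Finset ℝ) (hs : ∀ x ∈ s, 0 ≤ x) (q : ℝ → Polynomial ℝ) :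
    (∃ i₀ : ℕ, ∀ i ≥ i₀, 0 ≤ ∑ x ∈ s, (q x).eval (i : ℝ) * x ^ i) ∨
    (∃ i₀ : ℕ, ∀ i ≥ i₀, ∑ x ∈ s, (q x).eval (i : ℝ) * x ^ i ≤ 0) := by
  set t := s.filter (fun x => q x ≠ 0) with ht
  have hsum : ∀ i : ℕ, ∑ x ∈ s, (q x).eval (i : ℝ) * x ^ i
      = ∑ x ∈ t, (q x).eval (i : ℝ) * x ^ i := by
    intro i
    rw [ht]
    refine (Finset.sum_filter_of_ne ?_).symm
    intro x _ hne h0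
    apply hne
    rw [h0]
    simp
  by_cases hne : t.Nonempty
  · set a := t.max' hne with ha
    have hat : a ∈ t := t.max'_mem hne
    have hqa : q a ≠ 0 := (Finset.mem_filter.mp hat).2
    have has : 0 ≤ a := hs a (Finset.mem_filter.mp hat).1
    rcases eq_or_lt_of_le has with h0 | hpos
    · -- a = 0 : every base in t is 0, so the sum vanishes for i ≥ 1
      left
      refine ⟨1, fun i hi => ?_⟩
      rw [hsum]
      refine le_of_eq (Finset.sum_eq_zero fun x hx => ?_).symm
      have hx0 : x = 0 :=
        le_antisymm (h0 ▸ t.le_max' x hx) (hs x (Finset.mem_filter.mp hx).1)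
      rw [hx0, zero_pow (by omega), mul_zero]
    · -- a > 0 : the term with base a dominates
      set d := (q a).natDegree with hd
      set L := (q a).leadingCoeff with hL
      have hLne : L ≠ 0 := Polynomial.leadingCoeff_ne_zero.mpr hqa
      have hane : ∀ i : ℕ, (a : ℝ) ^ i ≠ 0 := fun i => pow_ne_zero i (ne_of_gt hpos)
      have hterm : ∀ x ∈ t, Tendsto
          (fun i : ℕ => (q x).eval (i : ℝ) * x ^ i / (a ^ i * (i : ℝ) ^ d)) atTop
          (𝓝 (if x = a then L else 0)) := by
        intro x hx
        by_cases hxa : x = a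
        · rw [if_pos hxa, hxa]
          have heq : ∀ i : ℕ, (q a).eval (i : ℝ) * a ^ i / (a ^ i * (i : ℝ) ^ d)
              = (q a).eval (i : ℝ) / (i : ℝ) ^ d := by
            intro i
            rcases eq_or_ne ((i : ℝ) ^ d) 0 with h | h
            · rw [h, mul_zero, div_zero, div_zero]
            · field_simp
          have h := exp_poly_aux_tendsto_eval_div_pow (q a)
          rw [← hd, ← hL] at h
          exact h.congr fun i => (heq i).symm
        · simp only [if_neg hxa]
          have hx0 : 0 ≤ x := hs x (Finset.mem_filter.mp hx).1
          have hxlt : x < a := lt_of_le_of_ne (t.le_max' x hx) hxa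
          have hr0 : 0 ≤ x / a := div_nonneg hx0 (le_of_lt hpos)
          have hr1 : x / a < 1 := (div_lt_one hpos).mpr hxlt
          have hG : Tendsto (fun i : ℕ => (q x).eval (i : ℝ) * (x / a) ^ i) atTop (𝓝 0) :=
            exp_poly_aux_tendsto_poly_mul_pow (q x) hr0 hr1
          have heq : ∀ i : ℕ, (q x).eval (i : ℝ) * x ^ i / (a ^ i * (i : ℝ) ^ d)
              = ((q x).eval (i : ℝ) * (x / a) ^ i) / (i : ℝ) ^ d := by
            intro i
            rw [div_pow, ← mul_div_assoc, div_div]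
          rw [tendsto_zero_iff_abs_tendsto_zero]
          apply squeeze_zero' (g := fun i : ℕ => |(q x).eval (i : ℝ) * (x / a) ^ i|)
            (Eventually.of_forall fun i => abs_nonneg _)
          · filter_upwards [eventually_ge_atTop 1] with i hi
            rw [heq i, abs_div]
            refine div_le_self (abs_nonneg _) ?_
            rw [abs_of_nonneg (by positivity)]
            exact one_le_pow₀ (by exact_mod_cast hi)
          · simpa using hG.abs
      have key : Tendsto (fun i : ℕ =>
          (∑ x ∈ t, (q x).eval (i : ℝ) * x ^ i) / (a ^ i * (i : ℝ) ^ d)) atTop (𝓝 L) := by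
        have h := tendsto_finset_sum t hterm
        rw [Finset.sum_ite_eq' t a (fun _ => L)] at h
        simp only [if_pos hat] at h
        apply h.congr
        intro i
        rw [Finset.sum_div]
      have hposden : ∀ i : ℕ, 1 ≤ i → 0 < a ^ i * (i : ℝ) ^ d := by
        intro i hi
        have : (0:ℝ) < (i : ℝ) := by exact_mod_cast hi
        positivity
      have hrecover : ∀ i : ℕ, 1 ≤ i → ∑ x ∈ t, (q x).eval (i : ℝ) * x ^ i
          = ((∑ x ∈ t, (q x).eval (i : ℝ) * x ^ i) / (a ^ i * (i : ℝ) ^ d))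
            * (a ^ i * (i : ℝ) ^ d) := by
        intro i hi
        rw [div_mul_cancel₀ _ (ne_of_gt (hposden i hi))]
      rcases hLne.lt_or_gt with hLneg | hLpos
      · right
        have hev : ∀ᶠ i : ℕ in atTop,
            (∑ x ∈ t, (q x).eval (i : ℝ) * x ^ i) / (a ^ i * (i : ℝ) ^ d) < 0 :=
          key.eventually (eventually_lt_nhds hLneg)
        obtain ⟨i₀, hi₀⟩ := eventually_atTop.mp (hev.and (eventually_ge_atTop 1))
        refine ⟨i₀, fun i hi => ?_⟩
        obtain ⟨hlt, h1⟩ := hi₀ i hi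
        rw [hsum, hrecover i h1]
        exact mul_nonpos_of_nonpos_of_nonneg (le_of_lt hlt) (le_of_lt (hposden i h1))
      · left
        have hev : ∀ᶠ i : ℕ in atTop,
            0 < (∑ x ∈ t, (q x).eval (i : ℝ) * x ^ i) / (a ^ i * (i : ℝ) ^ d) :=
          key.eventually (eventually_gt_nhds hLpos)
        obtain ⟨i₀, hi₀⟩ := eventually_atTop.mp (hev.and (eventually_ge_atTop 1))
        refine ⟨i₀, fun i hi => ?_⟩
        obtain ⟨hlt, h1⟩ := hi₀ i hi
        rw [hsum, hrecover i h1]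
        exact mul_nonneg (le_of_lt hlt) (le_of_lt (hposden i h1))
  · left
    refine ⟨0, fun i _ => ?_⟩
    rw [hsum]
    rw [Finset.not_nonempty_iff_eq_empty.mp hne]
    simp

/-- **Eventual sign-definiteness of exponential polynomials.** If `f : ℕ → ℝ` is an
exponential polynomial, i.e. `f i = ∑ j, (p j).eval i * (c j) ^ i` for finitely many real
polynomials `p j` and nonnegative real bases `c j ≥ 0`, then `f` is eventually
sign-definite: either eventually `f i ≥ 0`, or eventually `f i ≤ 0`. -/
theorem exp_poly_eventually_sign_definite
    (f : ℕ → ℝ) (k : ℕ) (p : Fin k → Polynomial ℝ) (c : Fin k → ℝ)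
    (hc : ∀ j, 0 ≤ c j)
    (hf : ∀ i : ℕ, f i = ∑ j, (p j).eval (i : ℝ) * (c j) ^ i) :
    (∃ i₀ : ℕ, ∀ i ≥ i₀, 0 ≤ f i) ∨ (∃ i₀ : ℕ, ∀ i ≥ i₀, f i ≤ 0) := by
  have heq : ∀ i : ℕ, f i = ∑ x ∈ Finset.univ.image c,
      (∑ j ∈ Finset.univ.filter (fun j => c j = x), p j).eval (i : ℝ) * x ^ i := by
    intro i
    rw [hf]
    rw [← Finset.sum_fiberwise_of_maps_to
      (fun j _ => Finset.mem_image_of_mem c (Finset.mem_univ j))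
      (fun j => (p j).eval (i : ℝ) * c j ^ i)]
    apply Finset.sum_congr rfl
    intro x _
    rw [Polynomial.eval_finset_sum, Finset.sum_mul]
    apply Finset.sum_congr rfl
    intro j hj
    rw [(Finset.mem_filter.mp hj).2]
  have h := exp_poly_aux_main (Finset.univ.image c)
    (by
      intro x hx
      obtain ⟨j, _, rfl⟩ := Finset.mem_image.mp hx
      exact hc j)
    (fun x => ∑ j ∈ Finset.univ.filter (fun j => c j = x), p j)
  rcases h with ⟨i₀, h⟩ | ⟨i₀, h⟩
  · left; exact ⟨i₀, fun i hi => (heq i) ▸ h i hi⟩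
  · right; exact ⟨i₀, fun i hi => (heq i) ▸ h i hi⟩
end

section
/- Shift-invariance of asymptotic growth of exponential polynomials (property (1)): Let s : ℕ → ℝ be an exponential polynomial, i.e. s(i) = Σ_{j=1}^{k} p_j(i)·c_j^i with real polynomials p_j and pairwise distinct nonnegative real bases c_j ≥ 0, and let r ∈ ℕ. Then there exist α, β ∈ ℝ with α > 0 and β > 0 and an index i₀ ∈ ℕ such that α·s(i) ≤ s(i + r) ≤ β·s(i) for all i ≥ i₀; that is, constant shifts of the argument do not change the asymptotic behavior of s up to positive constant factors. -/
open Filter Asymptotics Polynomial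

/-! Among the terms with `p j ≠ 0`, the one with the largest base `d = c j` dominates, so either
`s` vanishes eventually (all surviving bases are `0`) or `s i ~ a * i ^ m * d ^ i` with `a ≠ 0`,
`d > 0`. Then `s (i + r) ~ d ^ r * s i`, and since `s` eventually has the sign of `a`, this gives
`α * s i ≤ s (i + r) ≤ β * s i` with `{α, β} = {d ^ r / 2, 2 * d ^ r}`. -/

theorem isLittleO_eval_mul_pow_of_abs_lt (q : ℝ[X]) {c d : ℝ} (hcd : |c| < d) :
    (fun i : ℕ => q.eval (i : ℝ) * c ^ i) =o[atTop] fun i => d ^ i := by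
  have hq : (fun i : ℕ => q.eval (i : ℝ)) =O[atTop] fun i => (i : ℝ) ^ q.natDegree :=
    (((isEquivalent_atTop_lead q).isBigO.trans (isBigO_const_mul_self _ _ _)).comp_tendsto
      tendsto_natCast_atTop_atTop)
  exact (hq.mul (isBigO_refl (fun i => c ^ i) atTop)).trans_isLittleO
    (isLittleO_pow_const_mul_const_pow_const_pow_of_norm_lt _ hcd)

theorem isEquivalent_eval_mul_pow (q : ℝ[X]) (d : ℝ) :
    (fun i : ℕ => q.eval (i : ℝ) * d ^ i) ~[atTop]
      fun i => q.leadingCoeff * ((i : ℝ) ^ q.natDegree * d ^ i) := by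
  simpa only [Pi.mul_def, Function.comp_def, mul_assoc] using
    ((isEquivalent_atTop_lead q).comp_tendsto tendsto_natCast_atTop_atTop).mul
      (IsEquivalent.refl (u := fun i : ℕ => d ^ i))

theorem pow_isBigO_mul_natCast_pow_mul_pow {a : ℝ} (ha : a ≠ 0) (d : ℝ) (m : ℕ) :
    (fun i : ℕ => d ^ i) =O[atTop] fun i => a * ((i : ℝ) ^ m * d ^ i) := by
  refine (IsBigO.of_bound 1 ?_).const_mul_right ha
  filter_upwards [eventually_ge_atTop 1] with i hi
  rw [one_mul, norm_mul]
  exact le_mul_of_one_le_left (norm_nonneg _)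
    (by simpa using one_le_pow₀ (by exact_mod_cast hi : (1 : ℝ) ≤ i))

theorem isEquivalent_sum_eval_mul_pow_of_dominant {ι : Type*} [Fintype ι] [DecidableEq ι]
    (p : ι → ℝ[X]) (c : ι → ℝ) {j₀ : ι} (hj₀ : p j₀ ≠ 0)
    (hdom : ∀ j ≠ j₀, p j ≠ 0 → |c j| < c j₀) :
    (fun i : ℕ => ∑ j, (p j).eval (i : ℝ) * c j ^ i) ~[atTop]
      fun i => (p j₀).leadingCoeff * ((i : ℝ) ^ (p j₀).natDegree * c j₀ ^ i) := by
  have hrest : (fun i : ℕ => ∑ j ∈ Finset.univ.erase j₀, (p j).eval (i : ℝ) * c j ^ i) =o[atTop]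
      fun i => (p j₀).leadingCoeff * ((i : ℝ) ^ (p j₀).natDegree * c j₀ ^ i) := by
    refine IsLittleO.fun_sum fun j hj => ?_
    by_cases hpj : p j = 0
    · simp [hpj]
    · exact (isLittleO_eval_mul_pow_of_abs_lt (p j)
        (hdom j (Finset.ne_of_mem_erase hj) hpj)).trans_isBigO
          (pow_isBigO_mul_natCast_pow_mul_pow (leadingCoeff_ne_zero.mpr hj₀) _ _)
  exact ((isEquivalent_eval_mul_pow (p j₀) (c j₀)).add_isLittleO hrest).congr_left
    (.of_forall fun i => Finset.add_sum_erase _ (fun j => (p j).eval (i : ℝ) * c j ^ i)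
      (Finset.mem_univ j₀))

theorem eventually_sum_eval_mul_pow_eq_zero_or_isEquivalent {ι : Type*} [Fintype ι]
    (p : ι → ℝ[X]) (c : ι → ℝ) (hc : ∀ j, 0 ≤ c j) (hinj : Function.Injective c) :
    (∀ᶠ i : ℕ in atTop, ∑ j, (p j).eval (i : ℝ) * c j ^ i = 0) ∨
      ∃ a ≠ 0, ∃ d > 0, ∃ m : ℕ, (fun i : ℕ => ∑ j, (p j).eval (i : ℝ) * c j ^ i) ~[atTop]
        fun i => a * ((i : ℝ) ^ m * d ^ i) := by
  classical
  by_cases hlive : ∃ j, p j ≠ 0 ∧ c j ≠ 0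
  · right
    obtain ⟨j₁, hpj₁, hcj₁⟩ := hlive
    obtain ⟨j₀, hj₀, hmax⟩ := (Finset.univ.filter fun j => p j ≠ 0).exists_max_image c
      ⟨j₁, by simpa using hpj₁⟩
    simp only [Finset.mem_filter, Finset.mem_univ, true_and] at hj₀ hmax
    refine ⟨_, leadingCoeff_ne_zero.mpr hj₀, c j₀, ((hc j₁).lt_of_ne' hcj₁).trans_le (hmax j₁ hpj₁),
      _, isEquivalent_sum_eval_mul_pow_of_dominant p c hj₀ fun j hj hpj => ?_⟩
    rw [abs_of_nonneg (hc j)]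
    exact (hmax j hpj).lt_of_ne (hinj.ne hj)
  · left
    push Not at hlive
    filter_upwards [eventually_ge_atTop 1] with i hi
    refine Finset.sum_eq_zero fun j _ => ?_
    by_cases hpj : p j = 0
    · simp [hpj]
    · simp [hlive j hpj, zero_pow (Nat.one_le_iff_ne_zero.mp hi)]

theorem isEquivalent_natCast_add_natCast (r : ℕ) :
    (fun i : ℕ => ((i + r : ℕ) : ℝ)) ~[atTop] fun i => (i : ℝ) := by
  simpa [IsEquivalent, Pi.sub_def, Function.comp_def] using
    (isLittleO_const_id_atTop (r : ℝ)).comp_tendsto tendsto_natCast_atTop_atTop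

theorem isEquivalent_shift_of_isEquivalent_mul_pow {u : ℕ → ℝ} {a d : ℝ} {m : ℕ}
    (h : u ~[atTop] fun i => a * ((i : ℝ) ^ m * d ^ i)) (r : ℕ) :
    (fun i => u (i + r)) ~[atTop] fun i => d ^ r * u i := by
  have hmodel : (fun i : ℕ => a * (((i + r : ℕ) : ℝ) ^ m * d ^ (i + r))) ~[atTop]
      fun i => d ^ r * (a * ((i : ℝ) ^ m * d ^ i)) := by
    have := ((IsEquivalent.refl (u := fun _ : ℕ => a * d ^ r)).mul
      ((isEquivalent_natCast_add_natCast r).pow m)).mul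
        (IsEquivalent.refl (u := fun i : ℕ => d ^ i))
    convert this using 1 <;> ext i <;> simp only [Pi.mul_apply, Pi.pow_apply, pow_add] <;> ring
  calc (fun i => u (i + r))
      _ ~[atTop] fun i => a * (((i + r : ℕ) : ℝ) ^ m * d ^ (i + r)) :=
        h.comp_tendsto (tendsto_add_atTop_nat r)
      _ ~[atTop] fun i => d ^ r * (a * ((i : ℝ) ^ m * d ^ i)) := hmodel
      _ ~[atTop] fun i => d ^ r * u i := IsEquivalent.refl.mul h.symm

theorem exists_shift_bounds_of_isEquivalent {u : ℕ → ℝ} {L : ℝ} {r : ℕ} (hL : 0 < L)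
    (h : (fun i => u (i + r)) ~[atTop] fun i => L * u i)
    (hsign : (∀ᶠ i in atTop, 0 ≤ u i) ∨ ∀ᶠ i in atTop, u i ≤ 0) :
    ∃ α β : ℝ, 0 < α ∧ 0 < β ∧ ∃ i₀ : ℕ, ∀ i ≥ i₀,
      α * u i ≤ u (i + r) ∧ u (i + r) ≤ β * u i := by
  have hclose : ∀ᶠ i in atTop, |u (i + r) - L * u i| ≤ L / 2 * |u i| := by
    filter_upwards [h.isLittleO.bound one_half_pos] with i hi
    simpa [abs_mul, abs_of_pos hL, div_eq_inv_mul, mul_assoc] using hi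
  rcases hsign with hnonneg | hnonpos
  · obtain ⟨i₀, hi₀⟩ := eventually_atTop.mp (hclose.and hnonneg)
    refine ⟨L / 2, 2 * L, by positivity, by positivity, i₀, fun i hi => ?_⟩
    obtain ⟨hci, hui⟩ := hi₀ i hi
    rw [abs_of_nonneg hui, abs_le] at hci
    constructor <;> nlinarith
  · obtain ⟨i₀, hi₀⟩ := eventually_atTop.mp (hclose.and hnonpos)
    refine ⟨2 * L, L / 2, by positivity, by positivity, i₀, fun i hi => ?_⟩
    obtain ⟨hci, hui⟩ := hi₀ i hi
    rw [abs_of_nonpos hui, abs_le] at hci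
    constructor <;> nlinarith

/-- **Shift-invariance of asymptotic growth of exponential polynomials.** If `s : ℕ → ℝ`
is an exponential polynomial `s i = ∑ j, (p j).eval i * (c j) ^ i` with real polynomials
`p j` and pairwise distinct nonnegative real bases `c j ≥ 0`, then for any shift `r ∈ ℕ`
there are constants `α, β > 0` and an index `i₀` with
`α * s i ≤ s (i + r) ≤ β * s i` for all `i ≥ i₀`: constant shifts of the argument do not
change the asymptotic behavior of `s` up to positive constant factors. -/
theorem exp_poly_shift_invariance
    (s : ℕ → ℝ) (k : ℕ) (p : Fin k → Polynomial ℝ) (c : Fin k → ℝ)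
    (hc : ∀ j, 0 ≤ c j) (hdist : Function.Injective c)
    (hs : ∀ i : ℕ, s i = ∑ j, (p j).eval (i : ℝ) * (c j) ^ i)
    (r : ℕ) :
    ∃ α β : ℝ, 0 < α ∧ 0 < β ∧ ∃ i₀ : ℕ, ∀ i ≥ i₀,
      α * s i ≤ s (i + r) ∧ s (i + r) ≤ β * s i := by
  obtain rfl : s = fun i : ℕ => ∑ j, (p j).eval (i : ℝ) * c j ^ i := funext hs
  rcases eventually_sum_eval_mul_pow_eq_zero_or_isEquivalent p c hc hdist with
    hzero | ⟨a, ha, d, hd, m, hequiv⟩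
  · obtain ⟨i₀, hi₀⟩ := eventually_atTop.mp hzero
    exact ⟨1, 1, one_pos, one_pos, i₀, fun i hi => by
      simp only [hi₀ i hi, hi₀ (i + r) (by omega), mul_zero, le_refl, and_self]⟩
  · refine exists_shift_bounds_of_isEquivalent (pow_pos hd r)
      (isEquivalent_shift_of_isEquivalent_mul_pow hequiv r) ?_
    rcases ha.lt_or_gt with hneg | hpos
    · exact .inr (hequiv.eventually_nonpos (.of_forall fun i =>
        mul_nonpos_of_nonpos_of_nonneg hneg.le (by positivity)))
    · exact .inl (hequiv.eventually_nonneg (.of_forall fun i => by positivity))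
end
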